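/- arXiv:2311.00779 — 9 statements merged into one kernel-verified Lean document; each statement's English description precedes it below -/
import Mathlib

section
/- Let H be a hypergraph and let h₁, h₂ be two distinct acyclic orientations of H. Then there exists a hyperedge e ∈ 𝓔 such that h₁(e) ≠ h₂(e) and the ordered pair (h₁(e), h₂(e)) is flippable in h₁. -/
/-!
A hypergraph on vertex type `V` is given by a finite collection `𝓔` of nonempty
hyperedges (finsets of `V`).  An orientation assigns to each hyperedge a head
belonging to it.  `Arc 𝓔 h u v` is the arc relation of the digraph `D_h`, and an
orientation is acyclic if `D_h` has no directed cycle.  `flip 𝓔 h u v` is the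
orientation `h^{(u,v)}`, and `(u, v)` is flippable in `h` if `h^{(u,v)}` is acyclic.
-/

namespace PaperFlip

variable {V : Type*} [DecidableEq V]

/-- The hyperedges of a hypergraph, viewed as a subtype. -/
abbrev Edge (𝓔 : Finset (Finset V)) := {e : Finset V // e ∈ 𝓔}

/-- `h` is an orientation: the head of every hyperedge belongs to it. -/
def IsOrientation (𝓔 : Finset (Finset V)) (h : Edge 𝓔 → V) : Prop :=
  ∀ e : Edge 𝓔, h e ∈ e.1

/-- The arc relation of the digraph `D_h`: there is an arc from `u` to `v` iff some
hyperedge `e` has head `v` and contains `u` as a different vertex. -/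
def Arc (𝓔 : Finset (Finset V)) (h : Edge 𝓔 → V) (u v : V) : Prop :=
  ∃ e : Edge 𝓔, h e = v ∧ u ∈ e.1 ∧ u ≠ v

/-- An acyclic orientation: an orientation whose digraph `D_h` has no directed cycle. -/
def IsAcyclic (𝓔 : Finset (Finset V)) (h : Edge 𝓔 → V) : Prop :=
  IsOrientation 𝓔 h ∧ ∀ v : V, ¬ Relation.TransGen (Arc 𝓔 h) v v

/-- The orientation `h^{(u,v)}`: every hyperedge containing both `u` and `v` whose
head is `u` gets the new head `v`; all other heads are unchanged. -/
def flip (𝓔 : Finset (Finset V)) (h : Edge 𝓔 → V) (u v : V) : Edge 𝓔 → V :=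
  fun e => if u ∈ e.1 ∧ v ∈ e.1 ∧ h e = u then v else h e

/-- The ordered pair `(u, v)` of distinct vertices is flippable in `h` if `h^{(u,v)}`
is acyclic. -/
def Flippable (𝓔 : Finset (Finset V)) (h : Edge 𝓔 → V) (u v : V) : Prop :=
  u ≠ v ∧ IsAcyclic 𝓔 (flip 𝓔 h u v)

end PaperFlip

/-!
Let `v` be a sink of `D_{h₂}` among the `h₂`-heads of the edges on which `h₁` and `h₂` differ,
and `u` a source of `D_{h₁}` among the `h₁`-heads of those differing edges with `h₂`-head `v`;
the pair `(u, v)` is flippable in `h₁`. Every arc of `D_{h₁^{(u,v)}}` not ending at `v` is an arc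
of `D_{h₁}`, so a new cycle would pass through `v`. But every vertex on a path leaving `v` is
reachable from `v` in `D_{h₂}`, or from the `h₁`-head `≠ u` of a differing edge with `h₂`-head
`v` in `D_{h₁}`: the extremal choices of `v` and `u` propagate this along each arc and forbid
it at `v` itself.
-/

theorem Finset.exists_forall_not_rel {ι α : Type*} {r : α → α → Prop} [IsStrictOrder α r]
    (f : ι → α) {s : Finset ι} (hs : s.Nonempty) : ∃ i ∈ s, ∀ j ∈ s, ¬ r (f j) (f i) := by
  obtain ⟨⟨i, hi⟩, -, hmin⟩ :=
    (Set.wellFoundedOn_image.mp ((s.finite_toSet.image f).wellFoundedOn (r := r))).has_min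
      Set.univ ⟨⟨_, hs.choose_spec⟩, trivial⟩
  exact ⟨i, hi, fun j hj hji => hmin ⟨j, hj⟩ trivial hji⟩

namespace Relation

theorem TransGen.self_mono_or_through {α : Type*} {r s : α → α → Prop} {v z : α}
    (hrs : ∀ a b, r a b → b ≠ v → s a b) (hz : TransGen r z z) :
    TransGen s z z ∨ TransGen r v v := by
  have key : ∀ {w}, TransGen r z w →
      TransGen s z w ∨ ReflTransGen r z v ∧ ReflTransGen r v w := by
    intro w hzw
    induction hzw with
    | @single w hzw =>
      by_cases hw : w = v
      · exact Or.inr ⟨hw ▸ ReflTransGen.single hzw, hw ▸ ReflTransGen.refl⟩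
      · exact Or.inl (TransGen.single (hrs _ _ hzw hw))
    | @tail b w hrzb hbw ih =>
      rcases ih with hszb | ⟨hzv, hvb⟩
      · by_cases hw : w = v
        · exact Or.inr ⟨hw ▸ (hrzb.tail hbw).to_reflTransGen, hw ▸ ReflTransGen.refl⟩
        · exact Or.inl (hszb.tail (hrs _ _ hbw hw))
      · exact Or.inr ⟨hzv, hvb.tail hbw⟩
  rcases key hz with hs | ⟨hzv, hvz⟩
  · exact Or.inl hs
  · exact Or.inr ((TransGen.trans_right hvz hz).trans_left hzv)

end Relation

namespace PaperFlip

open Relation Finset Function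

variable {V : Type*} {𝓔 : Finset (Finset V)} {h₁ h₂ : Edge 𝓔 → V} {u v b c : V}

theorem IsAcyclic.isStrictOrder {h : Edge 𝓔 → V} (hh : IsAcyclic 𝓔 h) :
    IsStrictOrder V (TransGen (Arc 𝓔 h)) where
  irrefl := hh.2

structure IsExtremalPair (𝓔 : Finset (Finset V)) (h₁ h₂ : Edge 𝓔 → V) (u v : V) : Prop where
  arc : Arc 𝓔 h₂ u v
  not_transGen_head : ∀ g : Edge 𝓔, h₁ g ≠ h₂ g → ¬ TransGen (Arc 𝓔 h₂) v (h₂ g)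
  not_transGen_tail : ∀ g : Edge 𝓔, h₁ g ≠ h₂ g → h₂ g = v → ¬ TransGen (Arc 𝓔 h₁) (h₁ g) u

variable (𝓔 h₁ h₂ u v) in
def FlipInvariant (b : V) : Prop :=
  TransGen (Arc 𝓔 h₂) v b ∨
    ∃ g : Edge 𝓔, h₁ g ≠ h₂ g ∧ h₂ g = v ∧ h₁ g ≠ u ∧ ReflTransGen (Arc 𝓔 h₁) (h₁ g) b

theorem not_flipInvariant_head (hh₁ : IsAcyclic 𝓔 h₁) (hh₂ : IsAcyclic 𝓔 h₂) :
    ¬ FlipInvariant 𝓔 h₁ h₂ u v v := by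
  rintro (hvv | ⟨g, hg, hgv, -, hgv'⟩)
  · exact hh₂.2 v hvv
  · exact hh₁.2 v (TransGen.head' ⟨g, rfl, hgv ▸ hh₂.1 g, fun h => hg (h ▸ hgv).symm⟩ hgv')

theorem IsExtremalPair.head_eq_of_reflTransGen (hp : IsExtremalPair 𝓔 h₁ h₂ u v)
    (hvb : ReflTransGen (Arc 𝓔 h₂) v b) {g : Edge 𝓔} (hbg : b ∈ g.1) (hg : h₁ g ≠ h₂ g) :
    h₂ g = b := by
  by_contra hne
  exact hp.not_transGen_head g hg (TransGen.tail' hvb ⟨g, rfl, hbg, Ne.symm hne⟩)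

theorem IsExtremalPair.head_eq_of_flipped (hh₂ : IsAcyclic 𝓔 h₂)
    (hp : IsExtremalPair 𝓔 h₁ h₂ u v) {g : Edge 𝓔} (hgu : h₁ g = u) (hvg : v ∈ g.1) :
    h₂ g = v := by
  by_cases hg : h₁ g = h₂ g
  · obtain ⟨-, -, -, huv⟩ := hp.arc
    exact absurd ((TransGen.single hp.arc).tail ⟨g, hg ▸ hgu, hvg, huv.symm⟩) (hh₂.2 u)
  · exact hp.head_eq_of_reflTransGen ReflTransGen.refl hvg hg

theorem FlipInvariant.ne_tail (hh₂ : IsAcyclic 𝓔 h₂) (hp : IsExtremalPair 𝓔 h₁ h₂ u v)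
    (hb : FlipInvariant 𝓔 h₁ h₂ u v b) : b ≠ u := by
  rintro rfl
  rcases hb with hvb | ⟨g, hg, hgv, hgb, hgb'⟩
  · exact hh₂.2 v (hvb.tail hp.arc)
  · exact hp.not_transGen_tail g hg hgv
      ((reflTransGen_iff_eq_or_transGen.mp hgb').resolve_left hgb.symm)

section Flip

variable [DecidableEq V]

theorem IsOrientation.flip {h : Edge 𝓔 → V} (ho : IsOrientation 𝓔 h) :
    IsOrientation 𝓔 (flip 𝓔 h u v) := by
  intro g
  unfold PaperFlip.flip
  split_ifs with hg
  · exact hg.2.1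
  · exact ho g

theorem arc_of_arc_flip {h : Edge 𝓔 → V} (hbc : Arc 𝓔 (flip 𝓔 h u v) b c) (hc : c ≠ v) :
    Arc 𝓔 h b c := by
  obtain ⟨g, hgc, hbg, hbc⟩ := hbc
  refine ⟨g, ?_, hbg, hbc⟩
  unfold PaperFlip.flip at hgc
  split_ifs at hgc
  · exact absurd hgc.symm hc
  · exact hgc

theorem FlipInvariant.of_arc_flip (hh₁ : IsAcyclic 𝓔 h₁) (hh₂ : IsAcyclic 𝓔 h₂)
    (hp : IsExtremalPair 𝓔 h₁ h₂ u v) (hb : b = v ∨ FlipInvariant 𝓔 h₁ h₂ u v b)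
    (hbc : Arc 𝓔 (flip 𝓔 h₁ u v) b c) : FlipInvariant 𝓔 h₁ h₂ u v c := by
  obtain ⟨g, hgc, hbg, hbc⟩ := hbc
  by_cases hflip : u ∈ g.1 ∧ v ∈ g.1 ∧ h₁ g = u
  · rw [PaperFlip.flip, if_pos hflip] at hgc
    subst hgc
    have hg₂ : h₂ g = v := hp.head_eq_of_flipped hh₂ hflip.2.2 hflip.2.1
    rcases hb with rfl | hb
    · exact absurd rfl hbc
    have hbu : b ≠ u := hb.ne_tail hh₂ hp
    rcases hb with hvb | ⟨g', hg', hg'v, -, hg'b⟩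
    · exact absurd (hvb.tail ⟨g, hg₂, hbg, hbc⟩) (hh₂.2 v)
    · exact absurd (TransGen.tail' hg'b ⟨g, hflip.2.2, hbg, hbu⟩)
        (hp.not_transGen_tail g' hg' hg'v)
  · rw [PaperFlip.flip, if_neg hflip] at hgc
    rcases hb with rfl | hvb | ⟨g', hg', hg'v, hg'u, hg'b⟩
    · by_cases hg : h₁ g = h₂ g
      · exact Or.inl (TransGen.single ⟨g, hg ▸ hgc, hbg, hbc⟩)
      · refine Or.inr ⟨g, hg, hp.head_eq_of_reflTransGen ReflTransGen.refl hbg hg, ?_,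
          hgc ▸ ReflTransGen.refl⟩
        exact fun hgu => hflip ⟨hgu ▸ hh₁.1 g, hbg, hgu⟩
    · by_cases hg : h₁ g = h₂ g
      · exact Or.inl (hvb.tail ⟨g, hg ▸ hgc, hbg, hbc⟩)
      · exact absurd (hp.head_eq_of_reflTransGen hvb.to_reflTransGen hbg hg ▸ hvb)
          (hp.not_transGen_head g hg)
    · exact Or.inr ⟨g', hg', hg'v, hg'u, hg'b.tail ⟨g, hgc, hbg, hbc⟩⟩

theorem FlipInvariant.of_transGen (hh₁ : IsAcyclic 𝓔 h₁) (hh₂ : IsAcyclic 𝓔 h₂)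
    (hp : IsExtremalPair 𝓔 h₁ h₂ u v) (hvc : TransGen (Arc 𝓔 (flip 𝓔 h₁ u v)) v c) :
    FlipInvariant 𝓔 h₁ h₂ u v c := by
  induction hvc with
  | single hvc => exact .of_arc_flip hh₁ hh₂ hp (Or.inl rfl) hvc
  | tail _ hbc ih => exact .of_arc_flip hh₁ hh₂ hp (Or.inr ih) hbc

theorem IsExtremalPair.isAcyclic_flip (hh₁ : IsAcyclic 𝓔 h₁) (hh₂ : IsAcyclic 𝓔 h₂)
    (hp : IsExtremalPair 𝓔 h₁ h₂ u v) : IsAcyclic 𝓔 (flip 𝓔 h₁ u v) := by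
  refine ⟨hh₁.1.flip, fun z hz => ?_⟩
  rcases hz.self_mono_or_through (fun _ _ => arc_of_arc_flip) with hz₁ | hvv
  · exact hh₁.2 z hz₁
  · exact not_flipInvariant_head hh₁ hh₂ (FlipInvariant.of_transGen hh₁ hh₂ hp hvv)

end Flip

theorem exists_flippable_edge_general {V : Type*} [DecidableEq V] (𝓔 : Finset (Finset V))
    (h₁ h₂ : Edge 𝓔 → V)
    (hh₁ : IsAcyclic 𝓔 h₁) (hh₂ : IsAcyclic 𝓔 h₂) (hne : h₁ ≠ h₂) :
    ∃ e : Edge 𝓔, h₁ e ≠ h₂ e ∧ Flippable 𝓔 h₁ (h₁ e) (h₂ e) := by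
  have := hh₁.isStrictOrder
  have := hh₂.isStrictOrder
  obtain ⟨e, he⟩ : ∃ e, h₁ e ≠ h₂ e := not_forall.mp (mt funext hne)
  obtain ⟨f₀, hf₀, hv⟩ := exists_forall_not_rel (r := swap (TransGen (Arc 𝓔 h₂))) h₂
    (s := univ.filter fun e => h₁ e ≠ h₂ e) ⟨e, by simpa using he⟩
  obtain ⟨f, hf, hu⟩ := exists_forall_not_rel (r := TransGen (Arc 𝓔 h₁)) h₁
    (s := univ.filter fun e => h₁ e ≠ h₂ e ∧ h₂ e = h₂ f₀) ⟨f₀, by simpa using hf₀⟩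
  simp only [mem_filter, mem_univ, true_and, swap] at hf₀ hv hf hu
  have hp : IsExtremalPair 𝓔 h₁ h₂ (h₁ f) (h₂ f) :=
    { arc := ⟨f, rfl, hh₁.1 f, hf.1⟩
      not_transGen_head := fun g hg => hf.2 ▸ hv g hg
      not_transGen_tail := fun g hg hgv => hu g ⟨hg, hgv.trans hf.2⟩ }
  exact ⟨f, hf.1, hf.1, hp.isAcyclic_flip hh₁ hh₂⟩

/-- If `h₁ ≠ h₂` are acyclic orientations of a hypergraph `H`, then some
hyperedge `e` satisfies `h₁ e ≠ h₂ e` and `(h₁ e, h₂ e)` is flippable in `h₁`. -/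
theorem exists_flippable_edge {V : Type*} [DecidableEq V] (𝓔 : Finset (Finset V))
    (hE : ∀ e ∈ 𝓔, e.Nonempty) (h₁ h₂ : Edge 𝓔 → V)
    (hh₁ : IsAcyclic 𝓔 h₁) (hh₂ : IsAcyclic 𝓔 h₂) (hne : h₁ ≠ h₂) :
    ∃ e : Edge 𝓔, h₁ e ≠ h₂ e ∧ Flippable 𝓔 h₁ (h₁ e) (h₂ e) :=
  exists_flippable_edge_general 𝓔 h₁ h₂ hh₁ hh₂ hne

end PaperFlip
end

section
/- Let H be a hypergraph and let h₁, h₂ be acyclic orientations of H. Then the flip distance dist(h₁, h₂) is finite and satisfies dist(h₁, h₂) ≤ |{e ∈ 𝓔 : h₁(e) ≠ h₂(e)}|; that is, there exists a sequence of at most |{e ∈ 𝓔 : h₁(e) ≠ h₂(e)}| flips transforming h₁ into h₂. -/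
/-!
A hypergraph on vertex type `V` is given by a finite collection `𝓔` of nonempty
hyperedges (finsets of `V`).  An orientation assigns to each hyperedge a head
belonging to it.  `Arc 𝓔 h u v` is the arc relation of the digraph `D_h`, and an
orientation is acyclic if `D_h` has no directed cycle.  `flip 𝓔 h u v` is the
orientation `h^{(u,v)}`, and `(u, v)` is flippable in `h` if `h^{(u,v)}` is acyclic.
-/

namespace PaperFlip

variable {V : Type*} [DecidableEq V]

/-- `g₂` is obtained from `g₁` by a flip: `g₂ = g₁^{(u,v)} ≠ g₁` for some flippable
pair `(u, v)`. -/
def FlipStep (𝓔 : Finset (Finset V)) (g₁ g₂ : Edge 𝓔 → V) : Prop :=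
  ∃ u v : V, Flippable 𝓔 g₁ u v ∧ g₂ = flip 𝓔 g₁ u v ∧ g₂ ≠ g₁

/-- There is a sequence of `ℓ` flips transforming `h₁` into `h₂` (through acyclic
orientations). -/
def FlipSeq (𝓔 : Finset (Finset V)) (h₁ h₂ : Edge 𝓔 → V) (ℓ : ℕ) : Prop :=
  ∃ g : ℕ → Edge 𝓔 → V, g 0 = h₁ ∧ g ℓ = h₂ ∧ ∀ i < ℓ, FlipStep 𝓔 (g i) (g (i + 1))

end PaperFlip

/-!
Let `D` be the set of hyperedges on which `h₁` and `h₂` disagree. Pick `e ∈ D` whose `h₁`-head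
`u` is minimal in `D_{h₁}` among the `h₁`-heads of `D`, and, among those with `h₁`-head `u`, one
whose `h₂`-head `v` is maximal in `D_{h₂}`. Every `D_{h₁}`-path `v → w →* u` with `w ≠ u` has all
its arcs in `D_{h₂}` except the last, so these choices force the only path from `v` to `u` to be
the arc `v → u`, and then flipping `(u, v)` keeps `D_h` acyclic. As `u → v` in `D_{h₂}`, no
hyperedge containing `v` has `h₂`-head `u`, so the flip repairs `e` and spoils nothing: `D`
shrinks, and induction on `|D|` finishes.
-/

namespace Relation

lemma exists_forall_not_transGen_of_acyclic {α β : Type*} [Finite α] (r : β → β → Prop)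
    (hr : ∀ b, ¬ TransGen r b b) (f : α → β) {s : Set α} (hs : s.Nonempty) :
    ∃ a ∈ s, ∀ x ∈ s, ¬ TransGen r (f x) (f a) := by
  have : IsTrans α (InvImage (TransGen r) f) := ⟨fun _ _ _ => TransGen.trans⟩
  have : Std.Irrefl (InvImage (TransGen r) f) := ⟨fun a => hr (f a)⟩
  exact (Finite.wellFounded_of_trans_of_irrefl (InvImage (TransGen r) f)).has_min s hs

lemma not_transGen_self_of_forall_ne {α : Type*} {r s : α → α → Prop} {v : α}
    (hrs : ∀ a b, r a b → b ≠ v → s a b) (hs : ∀ a, ¬ TransGen s a a)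
    (hv : ¬ TransGen r v v) (a : α) : ¬ TransGen r a a := by
  have through_v : ∀ {a b}, TransGen r a b →
      TransGen s a b ∨ (ReflTransGen r a v ∧ ReflTransGen r v b) := by
    intro a b hab
    induction hab with
    | @single b hab =>
      obtain rfl | hb := eq_or_ne b v
      exacts [.inr ⟨.single hab, .refl⟩, .inl (.single (hrs _ _ hab hb))]
    | @tail b c _ hbc ih =>
      obtain rfl | hc := eq_or_ne c v
      · exact .inr ⟨.tail (TransGen.to_reflTransGen ‹_›) hbc, .refl⟩
      · rcases ih with ih | ⟨hav, hvb⟩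
        exacts [.inl (ih.tail (hrs _ _ hbc hc)), .inr ⟨hav, hvb.tail hbc⟩]
  intro haa
  rcases through_v haa with h | ⟨hav, hva⟩
  exacts [hs a h, hv (.trans_right hva (haa.trans_left hav))]

end Relation

namespace PaperFlip

open Relation

variable {V : Type*} {𝓔 : Finset (Finset V)}

lemma reflTransGen_arc_head {h : Edge 𝓔 → V} {g : Edge 𝓔} {y : V} (hy : y ∈ g.1) :
    ReflTransGen (Arc 𝓔 h) y (h g) := by
  obtain rfl | hyg := eq_or_ne y (h g)
  exacts [.refl, .single ⟨g, rfl, hy, hyg⟩]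

lemma reflTransGen_arc_of_minimal {h₁ h₂ : Edge 𝓔 → V} {e : Edge 𝓔}
    (hmin : ∀ g, h₁ g ≠ h₂ g → ¬ TransGen (Arc 𝓔 h₁) (h₁ g) (h₁ e)) {a b : V}
    (hab : ReflTransGen (Arc 𝓔 h₁) a b) (hbe : TransGen (Arc 𝓔 h₁) b (h₁ e)) :
    ReflTransGen (Arc 𝓔 h₂) a b := by
  induction hab with
  | refl => exact .refl
  | tail _ hcb ih =>
    obtain ⟨g, hg, hcg, hne⟩ := hcb
    have hg₂ : h₂ g = h₁ g := not_not.mp fun hdis => hmin g (Ne.symm hdis) (hg ▸ hbe)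
    exact (ih (.head ⟨g, hg, hcg, hne⟩ hbe)).tail ⟨g, hg₂.trans hg, hcg, hne⟩

variable [DecidableEq V]

lemma isOrientation_flip {h : Edge 𝓔 → V} (hh : IsOrientation 𝓔 h) (u v : V) :
    IsOrientation 𝓔 (flip 𝓔 h u v) := by
  intro g
  unfold PaperFlip.flip
  split_ifs with hg
  exacts [hg.2.1, hh g]

lemma arc_of_arc_flip_s1 {h : Edge 𝓔 → V} (hh : IsOrientation 𝓔 h) {u v a b : V}
    (hab : Arc 𝓔 (flip 𝓔 h u v) a b) :
    (Arc 𝓔 h a b ∧ (a = v → b ≠ u)) ∨ (b = v ∧ ReflTransGen (Arc 𝓔 h) a u) := by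
  obtain ⟨g, hg, hag, hne⟩ := hab
  unfold PaperFlip.flip at hg
  split_ifs at hg with hflip
  · exact .inr ⟨hg.symm, hflip.2.2 ▸ reflTransGen_arc_head hag⟩
  · refine .inl ⟨⟨g, hg, hag, hne⟩, ?_⟩
    rintro rfl rfl
    exact hflip ⟨hg ▸ hh g, hag, hg⟩

lemma isAcyclic_flip {h : Edge 𝓔 → V} (hh : IsAcyclic 𝓔 h) {u v : V}
    (hvu : ∀ w, Arc 𝓔 h v w → ReflTransGen (Arc 𝓔 h) w u → w = u) :
    IsAcyclic 𝓔 (flip 𝓔 h u v) := by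
  refine ⟨isOrientation_flip hh.1 u v, not_transGen_self_of_forall_ne (v := v) ?_ hh.2 ?_⟩
  · intro a b hab hb
    rcases arc_of_arc_flip_s1 hh.1 hab with hab | hab
    exacts [hab.1, absurd hab.1 hb]
  · suffices ∀ b, TransGen (Arc 𝓔 (flip 𝓔 h u v)) v b →
        TransGen (Arc 𝓔 h) v b ∧ ¬ ReflTransGen (Arc 𝓔 h) b u from
      fun hvv => hh.2 v (this v hvv).1
    intro b hvb
    induction hvb with
    | single hvb =>
      rcases arc_of_arc_flip_s1 hh.1 hvb with ⟨hvb', hbu⟩ | ⟨rfl, -⟩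
      · exact ⟨.single hvb', fun hbu' => hbu rfl (hvu _ hvb' hbu')⟩
      · obtain ⟨-, -, -, hvv⟩ := hvb
        exact absurd rfl hvv
    | tail _ hbc ih =>
      rcases arc_of_arc_flip_s1 hh.1 hbc with ⟨hbc, -⟩ | ⟨rfl, hbu⟩
      · exact ⟨ih.1.tail hbc, fun hcu => ih.2 (hcu.head hbc)⟩
      · exact absurd hbu ih.2

lemma FlipStep.isAcyclic {h h' : Edge 𝓔 → V} (hs : FlipStep 𝓔 h h') : IsAcyclic 𝓔 h' := by
  obtain ⟨u, v, ⟨-, hacy⟩, rfl, -⟩ := hs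
  exact hacy

lemma FlipSeq.refl (h : Edge 𝓔 → V) : FlipSeq 𝓔 h h 0 :=
  ⟨fun _ => h, rfl, rfl, fun i hi => absurd hi (Nat.not_lt_zero i)⟩

lemma FlipSeq.cons {h₁ h' h₂ : Edge 𝓔 → V} {ℓ : ℕ} (hs : FlipStep 𝓔 h₁ h')
    (hseq : FlipSeq 𝓔 h' h₂ ℓ) : FlipSeq 𝓔 h₁ h₂ (ℓ + 1) := by
  obtain ⟨g, hg0, hgℓ, hg⟩ := hseq
  refine ⟨fun | 0 => h₁ | i + 1 => g i, rfl, hgℓ, ?_⟩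
  rintro (_ | i) hi
  exacts [show FlipStep 𝓔 h₁ (g 0) from hg0 ▸ hs, hg i (by omega)]

def disagree (h₁ h₂ : Edge 𝓔 → V) : Finset (Edge 𝓔) :=
  Finset.univ.filter fun e => h₁ e ≠ h₂ e

section

variable {h₁ h₂ : Edge 𝓔 → V} {e : Edge 𝓔}

lemma eq_of_arc_of_reflTransGen (hh₁ : IsAcyclic 𝓔 h₁) (hh₂ : IsAcyclic 𝓔 h₂)
    (he : h₁ e ≠ h₂ e) (hmin : ∀ g, h₁ g ≠ h₂ g → ¬ TransGen (Arc 𝓔 h₁) (h₁ g) (h₁ e))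
    (hmax : ∀ g, h₁ g ≠ h₂ g → h₁ g = h₁ e → ¬ TransGen (Arc 𝓔 h₂) (h₂ e) (h₂ g))
    (w : V) (hvw : Arc 𝓔 h₁ (h₂ e) w) (hwu : ReflTransGen (Arc 𝓔 h₁) w (h₁ e)) :
    w = h₁ e := by
  rcases hwu.cases_tail with hw | ⟨y, hwy, g, hg, hyg, hyu⟩
  · exact hw.symm
  have hvy : TransGen (Arc 𝓔 h₁) (h₂ e) y := .head' hvw hwy
  have hvy₂ : TransGen (Arc 𝓔 h₂) (h₂ e) y := by
    rcases reflTransGen_iff_eq_or_transGen.mp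
        (reflTransGen_arc_of_minimal hmin hvy.to_reflTransGen (.single ⟨g, hg, hyg, hyu⟩))
      with rfl | hvy₂
    exacts [absurd hvy (hh₁.2 _), hvy₂]
  have hvg : TransGen (Arc 𝓔 h₂) (h₂ e) (h₂ g) := hvy₂.trans_left (reflTransGen_arc_head hyg)
  by_cases hgu : h₂ g = h₁ e
  · exact absurd (hvg.tail (hgu ▸ ⟨e, rfl, hh₁.1 e, he⟩)) (hh₂.2 _)
  · exact absurd hvg (hmax g (hg ▸ Ne.symm hgu) hg)

lemma disagree_flip_ssubset (hh₁ : IsOrientation 𝓔 h₁) (hh₂ : IsAcyclic 𝓔 h₂)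
    (he : h₁ e ≠ h₂ e) : disagree (flip 𝓔 h₁ (h₁ e) (h₂ e)) h₂ ⊂ disagree h₁ h₂ := by
  have hflip_e : flip 𝓔 h₁ (h₁ e) (h₂ e) e = h₂ e := if_pos ⟨hh₁ e, hh₂.1 e, rfl⟩
  have hsub : disagree (flip 𝓔 h₁ (h₁ e) (h₂ e)) h₂ ⊆ disagree h₁ h₂ := by
    intro g hg
    simp only [disagree, Finset.mem_filter, Finset.mem_univ, true_and] at hg ⊢
    unfold PaperFlip.flip at hg
    split_ifs at hg with hflip
    · rw [hflip.2.2]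
      intro hgu
      exact hh₂.2 _ (.head ⟨e, rfl, hh₁ e, he⟩ (.single ⟨g, hgu.symm, hflip.2.1, he.symm⟩))
    · exact hg
  refine (Finset.ssubset_iff_of_subset hsub).2 ⟨e, ?_, ?_⟩ <;> simp [disagree, he, hflip_e]

lemma exists_flipStep_disagree_ssubset (hh₁ : IsAcyclic 𝓔 h₁) (hh₂ : IsAcyclic 𝓔 h₂)
    (hD : (disagree h₁ h₂).Nonempty) :
    ∃ h', FlipStep 𝓔 h₁ h' ∧ disagree h' h₂ ⊂ disagree h₁ h₂ := by
  obtain ⟨g, hg⟩ := hD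
  obtain ⟨e₀, he₀, hmin⟩ := exists_forall_not_transGen_of_acyclic _ hh₁.2 h₁
    (s := {g | h₁ g ≠ h₂ g}) ⟨g, by simpa [disagree] using hg⟩
  obtain ⟨e, ⟨he, heu⟩, hmax⟩ := exists_forall_not_transGen_of_acyclic (Function.swap (Arc 𝓔 h₂))
    (fun b => transGen_swap.not.mpr (hh₂.2 b)) h₂
    (s := {g | h₁ g ≠ h₂ g ∧ h₁ g = h₁ e₀}) ⟨e₀, he₀, rfl⟩
  rw [← heu] at hmin
  have hvu := eq_of_arc_of_reflTransGen hh₁ hh₂ he hmin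
    (fun g hg hgu => transGen_swap.not.mp (hmax g ⟨hg, hgu.trans heu⟩))
  have hss := disagree_flip_ssubset hh₁.1 hh₂ he
  exact ⟨_, ⟨h₁ e, h₂ e, ⟨he, isAcyclic_flip hh₁ hvu⟩, rfl,
    fun h => hss.ne (congrArg (disagree · h₂) h)⟩, hss⟩

end

theorem exists_flipSeq_le_card_disagree {h₁ h₂ : Edge 𝓔 → V}
    (hh₁ : IsAcyclic 𝓔 h₁) (hh₂ : IsAcyclic 𝓔 h₂) :
    ∃ ℓ, FlipSeq 𝓔 h₁ h₂ ℓ ∧ ℓ ≤ (disagree h₁ h₂).card := by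
  rcases (disagree h₁ h₂).eq_empty_or_nonempty with hD | hD
  · have : h₁ = h₂ :=
      funext fun g => not_not.mp (Finset.filter_eq_empty_iff.mp hD (Finset.mem_univ g))
    exact ⟨0, this ▸ FlipSeq.refl h₁, Nat.zero_le _⟩
  · obtain ⟨h', hstep, hss⟩ := exists_flipStep_disagree_ssubset hh₁ hh₂ hD
    obtain ⟨ℓ, hseq, hℓ⟩ := exists_flipSeq_le_card_disagree hstep.isAcyclic hh₂
    exact ⟨ℓ + 1, hseq.cons hstep, by have := Finset.card_lt_card hss; omega⟩
termination_by (disagree h₁ h₂).card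
decreasing_by exact Finset.card_lt_card hss

theorem flipDist_le_card_diff_general {V : Type*} [DecidableEq V] (𝓔 : Finset (Finset V))
    (h₁ h₂ : Edge 𝓔 → V)
    (hh₁ : IsAcyclic 𝓔 h₁) (hh₂ : IsAcyclic 𝓔 h₂) :
    ∃ ℓ : ℕ, FlipSeq 𝓔 h₁ h₂ ℓ ∧
      ℓ ≤ (Finset.univ.filter fun e : Edge 𝓔 => h₁ e ≠ h₂ e).card :=
  exists_flipSeq_le_card_disagree hh₁ hh₂

/-- For acyclic orientations `h₁, h₂` of a hypergraph, there is a flip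
sequence from `h₁` to `h₂` of length at most `|{e ∈ 𝓔 : h₁(e) ≠ h₂(e)}|`; in particular
the flip distance is finite and at most this number. -/
theorem flipDist_le_card_diff {V : Type*} [DecidableEq V] (𝓔 : Finset (Finset V))
    (hE : ∀ e ∈ 𝓔, e.Nonempty) (h₁ h₂ : Edge 𝓔 → V)
    (hh₁ : IsAcyclic 𝓔 h₁) (hh₂ : IsAcyclic 𝓔 h₂) :
    ∃ ℓ : ℕ, FlipSeq 𝓔 h₁ h₂ ℓ ∧
      ℓ ≤ (Finset.univ.filter fun e : Edge 𝓔 => h₁ e ≠ h₂ e).card :=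
  flipDist_le_card_diff_general 𝓔 h₁ h₂ hh₁ hh₂

end PaperFlip
end

section
/- Let H be a linear hypergraph, i.e., a hypergraph in which |e₁ ∩ e₂| ≤ 1 for every two distinct hyperedges e₁, e₂ ∈ 𝓔. Then for any two acyclic orientations h₁, h₂ of H, the flip distance satisfies dist(h₁, h₂) = |{e ∈ 𝓔 : h₁(e) ≠ h₂(e)}|. -/
/-!
A hypergraph on vertex type `V` is given by a finite collection `𝓔` of nonempty
hyperedges (finsets of `V`).  An orientation assigns to each hyperedge a head
belonging to it.  `Arc 𝓔 h u v` is the arc relation of the digraph `D_h`, and an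
orientation is acyclic if `D_h` has no directed cycle.  `flip 𝓔 h u v` is the
orientation `h^{(u,v)}`, and `(u, v)` is flippable in `h` if `h^{(u,v)}` is acyclic.
-/

namespace PaperFlip

variable {V : Type*} [DecidableEq V]

/-- The flip distance: the least length of a flip sequence from `h₁` to `h₂`. -/
noncomputable def flipDist (𝓔 : Finset (Finset V)) (h₁ h₂ : Edge 𝓔 → V) : ℕ :=
  sInf {ℓ : ℕ | FlipSeq 𝓔 h₁ h₂ ℓ}

end PaperFlip

/-!
In a linear hypergraph two distinct vertices lie in at most one common hyperedge, so a flip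
changes the head of at most one hyperedge; hence every flip sequence from `h₁` to `h₂` has at
least as many steps as there are hyperedges on which `h₁` and `h₂` disagree.

Conversely, among the disagreeing hyperedges pick one whose `h₁`-head `u` is minimal in `D_{h₁}`
and, among those, one, `e`, whose `h₂`-head `v` is maximal in `D_{h₂}`. Re-heading `e` at `v` is a
flip, and it creates a cycle only if `D_{h₁}` has a path from `v` back into `e` that avoids `e`.
Following such a path, its first arc coming from a disagreeing hyperedge `f` would force
`h₁ f = u` by minimality and then `h₂ f = v` by maximality, so that `e` and `f` share `u` and `v`.
Without such an arc the path lives in `D_{h₂}` and closes a cycle there. Induction on the number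
of disagreeing hyperedges finishes the proof.
-/

open Relation

theorem _root_.Relation.TransGen.split_at_first {α : Type*} {r s t : α → α → Prop}
    (hts : ∀ x y, t x y → r x y ∨ s x y) {a b : α} (hab : TransGen t a b) :
    TransGen r a b ∨ ∃ x y, ReflTransGen r a x ∧ s x y ∧ ReflTransGen t y b := by
  induction hab using TransGen.head_induction_on with
  | single hab =>
    rcases hts _ _ hab with hr | hs
    · exact .inl (.single hr)
    · exact .inr ⟨_, _, .refl, hs, .refl⟩
  | head hac hcb ih =>
    rcases hts _ _ hac with hr | hs
    · rcases ih with hr' | ⟨x, y, hax, hs, hyb⟩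
      · exact .inl (hr'.head hr)
      · exact .inr ⟨x, y, hax.head hr, hs, hyb⟩
    · exact .inr ⟨_, _, .refl, hs, hcb.to_reflTransGen⟩

theorem exists_forall_not_transGen {ι α : Type*} [Finite ι] {r : α → α → Prop}
    (hr : ∀ a, ¬ TransGen r a a) (φ : ι → α) {s : Set ι} (hs : s.Nonempty) :
    ∃ i ∈ s, ∀ j ∈ s, ¬ TransGen r (φ j) (φ i) := by
  let R : ι → ι → Prop := fun i j => TransGen r (φ i) (φ j)
  have : IsTrans ι R := ⟨fun _ _ _ => TransGen.trans⟩
  have : Std.Irrefl R := ⟨fun i => hr (φ i)⟩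
  exact (Finite.wellFounded_of_trans_of_irrefl R).has_min s hs

namespace PaperFlip

def IsLinear {V : Type*} [DecidableEq V] (𝓔 : Finset (Finset V)) : Prop :=
  ∀ e₁ ∈ 𝓔, ∀ e₂ ∈ 𝓔, e₁ ≠ e₂ → (e₁ ∩ e₂).card ≤ 1

variable {V : Type*} {𝓔 : Finset (Finset V)}

theorem IsLinear.eq_of_mem [DecidableEq V] (hlin : IsLinear 𝓔) {e f : Edge 𝓔}
    {u v : V} (huv : u ≠ v) (hue : u ∈ e.1) (hve : v ∈ e.1) (huf : u ∈ f.1) (hvf : v ∈ f.1) :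
    e = f := by
  by_contra hef
  have htwo : 1 < (e.1 ∩ f.1).card :=
    Finset.one_lt_card.mpr ⟨u, Finset.mem_inter.mpr ⟨hue, huf⟩, v,
      Finset.mem_inter.mpr ⟨hve, hvf⟩, huv⟩
  exact (hlin e.1 e.2 f.1 f.2 (Subtype.coe_ne_coe.mpr hef)).not_gt htwo

theorem reflTransGen_arc_head_s3 (h : Edge 𝓔 → V) {e : Edge 𝓔} {x : V}
    (hx : x ∈ e.1) : ReflTransGen (Arc 𝓔 h) x (h e) := by
  by_cases hxe : x = h e
  · exact hxe ▸ .refl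
  · exact .single ⟨e, rfl, hx, hxe⟩

variable (𝓔) in
def ArcExcept (h : Edge 𝓔 → V) (e : Edge 𝓔) (x y : V) : Prop :=
  ∃ f : Edge 𝓔, f ≠ e ∧ h f = y ∧ x ∈ f.1 ∧ x ≠ y

theorem ArcExcept.arc {h : Edge 𝓔 → V} {e : Edge 𝓔} {x y : V}
    (hxy : ArcExcept 𝓔 h e x y) : Arc 𝓔 h x y :=
  let ⟨f, _, hf, hx, hne⟩ := hxy
  ⟨f, hf, hx, hne⟩

theorem isAcyclic_update [DecidableEq V] {h : Edge 𝓔 → V} {e : Edge 𝓔} {v : V}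
    (hh : IsAcyclic 𝓔 h) (hv : v ∈ e.1)
    (hno : ∀ w ∈ e.1, w ≠ v → ¬ TransGen (ArcExcept 𝓔 h e) v w) :
    IsAcyclic 𝓔 (Function.update h e v) := by
  set g := Function.update h e v
  have hacyc : ∀ z, ¬ TransGen (ArcExcept 𝓔 h e) z z :=
    fun z hz => hh.2 z (TransGen.mono (fun _ _ => ArcExcept.arc) _ _ hz)
  have hexcept : ∀ x y, ArcExcept 𝓔 h e x y → Arc 𝓔 g x y := by
    rintro x y ⟨f, hfe, rfl, hx, hne⟩
    exact ⟨f, Function.update_of_ne hfe v h, hx, hne⟩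
  have hsplit : ∀ x y, Arc 𝓔 g x y →
      ArcExcept 𝓔 h e x y ∨ (x ∈ e.1 ∧ x ≠ v ∧ y = v) := by
    rintro x y ⟨f, rfl, hx, hne⟩
    by_cases hfe : f = e
    · subst hfe
      exact .inr ⟨hx, by simpa [g] using hne, by simp [g]⟩
    · exact .inl ⟨f, hfe, (Function.update_of_ne hfe v h).symm, hx, hne⟩
  refine ⟨fun f => ?_, fun z hz => ?_⟩
  · by_cases hfe : f = e
    · subst hfe; simpa [g] using hv
    · simpa [g, Function.update_of_ne hfe] using hh.1 f
  rcases hz.split_at_first hsplit with hz | ⟨x, y, hzx, ⟨hx, hxv, hyv⟩, hyz⟩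
  · exact hacyc z hz
  rw [hyv] at hyz
  -- the cycle passes through `v`; read it again starting from `v`
  have hvv : TransGen (Arc 𝓔 g) v v :=
    .tail' (hyz.trans (ReflTransGen.mono hexcept _ _ hzx)) ⟨e, by simp [g], hx, hxv⟩
  rcases hvv.split_at_first hsplit with hvv | ⟨w, _, hvw, ⟨hw, hwv, -⟩, -⟩
  · exact hacyc v hvv
  · exact hno w hw hwv ((reflTransGen_iff_eq_or_transGen.mp hvw).resolve_left hwv)

theorem not_transGen_arcExcept_of_extremal [DecidableEq V] (hlin : IsLinear 𝓔)
    {h₁ h₂ : Edge 𝓔 → V} (hh₁ : IsAcyclic 𝓔 h₁) (hh₂ : IsAcyclic 𝓔 h₂) {e : Edge 𝓔}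
    (he : h₁ e ≠ h₂ e)
    (hmin : ∀ f, h₁ f ≠ h₂ f → ¬ TransGen (Arc 𝓔 h₁) (h₁ f) (h₁ e))
    (hmax : ∀ f, h₁ f ≠ h₂ f → h₁ f = h₁ e → ¬ TransGen (Arc 𝓔 h₂) (h₂ e) (h₂ f))
    {w : V} (hw : w ∈ e.1) (hwv : w ≠ h₂ e) : ¬ TransGen (ArcExcept 𝓔 h₁ e) (h₂ e) w := by
  intro hpath
  have hsplit : ∀ x y, ArcExcept 𝓔 h₁ e x y →
      Arc 𝓔 h₂ x y ∨ ∃ f : Edge 𝓔, f ≠ e ∧ h₁ f ≠ h₂ f ∧ x ∈ f.1 ∧ h₁ f = y := by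
    rintro x y ⟨f, hfe, rfl, hx, hne⟩
    by_cases hf : h₁ f = h₂ f
    · exact .inl ⟨f, hf.symm, hx, hne⟩
    · exact .inr ⟨f, hfe, hf, hx, rfl⟩
  rcases hpath.split_at_first hsplit with hpath | ⟨x, _, hvx, ⟨f, hfe, hf, hxf, rfl⟩, hfw⟩
  · exact hh₂.2 _ (hpath.tail ⟨e, rfl, hw, hwv⟩)
  have hfu : h₁ f = h₁ e := by
    have hreach : ReflTransGen (Arc 𝓔 h₁) (h₁ f) (h₁ e) :=
      (ReflTransGen.mono (fun _ _ => ArcExcept.arc) _ _ hfw).trans (reflTransGen_arc_head_s3 h₁ hw)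
    exact ((reflTransGen_iff_eq_or_transGen.mp hreach).resolve_right (hmin f hf)).symm
  have hfv : h₂ f = h₂ e := by
    have hreach : ReflTransGen (Arc 𝓔 h₂) (h₂ e) (h₂ f) :=
      hvx.trans (reflTransGen_arc_head_s3 h₂ hxf)
    exact (reflTransGen_iff_eq_or_transGen.mp hreach).resolve_right (hmax f hf hfu)
  exact hfe (hlin.eq_of_mem he (hfu ▸ hh₁.1 f) (hfv ▸ hh₂.1 f) (hh₁.1 e) (hh₂.1 e))

theorem exists_isAcyclic_update [DecidableEq V] (hlin : IsLinear 𝓔) {h₁ h₂ : Edge 𝓔 → V}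
    (hh₁ : IsAcyclic 𝓔 h₁) (hh₂ : IsAcyclic 𝓔 h₂) (hne : h₁ ≠ h₂) :
    ∃ e, h₁ e ≠ h₂ e ∧ IsAcyclic 𝓔 (Function.update h₁ e (h₂ e)) := by
  obtain ⟨e₀, he₀, hmin⟩ := exists_forall_not_transGen hh₁.2 h₁ (s := {f | h₁ f ≠ h₂ f})
    (Function.ne_iff.mp hne)
  obtain ⟨e, ⟨he, heu⟩, hmax⟩ := exists_forall_not_transGen
    (fun a ha => hh₂.2 a (transGen_swap.mp ha)) h₂ (s := {f | h₁ f ≠ h₂ f ∧ h₁ f = h₁ e₀})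
    ⟨e₀, he₀, rfl⟩
  refine ⟨e, he, isAcyclic_update hh₁ (hh₂.1 e) fun w hw hwv => ?_⟩
  exact not_transGen_arcExcept_of_extremal hlin hh₁ hh₂ he (fun f hf => heu ▸ hmin f hf)
    (fun f hf hfu hef => hmax f ⟨hf, hfu.trans heu⟩ (transGen_swap.mpr hef)) hw hwv

theorem flipSeq_zero_iff [DecidableEq V] {h₁ h₂ : Edge 𝓔 → V} :
    FlipSeq 𝓔 h₁ h₂ 0 ↔ h₁ = h₂ :=
  ⟨fun ⟨_, h0, hl, _⟩ => h0.symm.trans hl, fun h => ⟨fun _ => h₁, rfl, h, by simp⟩⟩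

theorem flipSeq_succ_iff [DecidableEq V] {h₁ h₂ : Edge 𝓔 → V} {ℓ : ℕ} :
    FlipSeq 𝓔 h₁ h₂ (ℓ + 1) ↔ ∃ g, FlipStep 𝓔 h₁ g ∧ FlipSeq 𝓔 g h₂ ℓ := by
  constructor
  · rintro ⟨g, rfl, hl, hsteps⟩
    exact ⟨g 1, hsteps 0 ℓ.succ_pos,
      fun i => g (i + 1), rfl, hl, fun i hi => hsteps (i + 1) (by omega)⟩
  · rintro ⟨g, hstep, g', rfl, hl, hsteps⟩
    refine ⟨fun | 0 => h₁ | i + 1 => g' i, rfl, hl, fun i hi => ?_⟩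
    cases i with
    | zero => exact hstep
    | succ i => exact hsteps i (by omega)

theorem flip_eq_update_of_isLinear [DecidableEq V] (hlin : IsLinear 𝓔) {h : Edge 𝓔 → V}
    {e : Edge 𝓔} {v : V} (hu : h e ∈ e.1) (hv : v ∈ e.1) (huv : h e ≠ v) :
    flip 𝓔 h (h e) v = Function.update h e v := by
  funext f
  by_cases hfe : f = e
  · subst hfe
    simp [flip, hu, hv]
  · rw [Function.update_of_ne hfe, flip, if_neg]
    rintro ⟨huf, hvf, -⟩
    exact hfe (hlin.eq_of_mem huv huf hvf hu hv)

theorem flipStep_update [DecidableEq V] (hlin : IsLinear 𝓔) {h : Edge 𝓔 → V} {e : Edge 𝓔}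
    {v : V} (hh : IsOrientation 𝓔 h) (hne : h e ≠ v)
    (hacyc : IsAcyclic 𝓔 (Function.update h e v)) :
    FlipStep 𝓔 h (Function.update h e v) := by
  have hv : v ∈ e.1 := by simpa using hacyc.1 e
  have hflip := flip_eq_update_of_isLinear hlin (hh e) hv hne
  refine ⟨h e, v, ⟨hne, hflip ▸ hacyc⟩, hflip.symm, fun hfix => hne ?_⟩
  simpa using (congrFun hfix e).symm

def diffEdges [DecidableEq V] (g h : Edge 𝓔 → V) : Finset (Edge 𝓔) :=
  Finset.univ.filter fun e => g e ≠ h e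

theorem card_diffEdges_le_add [DecidableEq V] (g₁ g₂ g₃ : Edge 𝓔 → V) :
    (diffEdges g₁ g₃).card ≤ (diffEdges g₁ g₂).card + (diffEdges g₂ g₃).card := by
  refine (Finset.card_le_card fun e he => ?_).trans (Finset.card_union_le _ _)
  simp only [diffEdges, Finset.mem_union, Finset.mem_filter, Finset.mem_univ, true_and] at he ⊢
  by_contra! h
  exact he (h.1.trans h.2)

theorem diffEdges_update [DecidableEq V] (h₁ h₂ : Edge 𝓔 → V) (e : Edge 𝓔) :
    diffEdges (Function.update h₁ e (h₂ e)) h₂ = (diffEdges h₁ h₂).erase e := by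
  ext f
  by_cases hfe : f = e
  · subst hfe
    simp [diffEdges]
  · simp [diffEdges, hfe]

theorem card_diffEdges_le_one_of_flipStep [DecidableEq V] (hlin : IsLinear 𝓔)
    {g₁ g₂ : Edge 𝓔 → V} (hstep : FlipStep 𝓔 g₁ g₂) : (diffEdges g₁ g₂).card ≤ 1 := by
  obtain ⟨u, v, ⟨huv, -⟩, rfl, -⟩ := hstep
  have hmem : ∀ f ∈ diffEdges g₁ (flip 𝓔 g₁ u v), u ∈ f.1 ∧ v ∈ f.1 := by
    intro f hf
    by_contra hfuv
    simp only [diffEdges, Finset.mem_filter, Finset.mem_univ, true_and] at hf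
    exact hf (by rw [flip, if_neg fun h => hfuv ⟨h.1, h.2.1⟩])
  refine Finset.card_le_one.mpr fun a ha b hb => ?_
  exact hlin.eq_of_mem huv (hmem a ha).1 (hmem a ha).2 (hmem b hb).1 (hmem b hb).2

theorem card_diffEdges_le_of_flipSeq [DecidableEq V] (hlin : IsLinear 𝓔) {h₁ h₂ : Edge 𝓔 → V}
    {ℓ : ℕ} (hseq : FlipSeq 𝓔 h₁ h₂ ℓ) : (diffEdges h₁ h₂).card ≤ ℓ := by
  induction ℓ generalizing h₁ with
  | zero => simp [diffEdges, flipSeq_zero_iff.mp hseq]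
  | succ ℓ ih =>
    obtain ⟨g, hstep, hseq⟩ := flipSeq_succ_iff.mp hseq
    calc (diffEdges h₁ h₂).card
        ≤ (diffEdges h₁ g).card + (diffEdges g h₂).card := card_diffEdges_le_add h₁ g h₂
      _ ≤ 1 + ℓ := add_le_add (card_diffEdges_le_one_of_flipStep hlin hstep) (ih hseq)
      _ = ℓ + 1 := add_comm 1 ℓ

theorem flipSeq_card_diffEdges [DecidableEq V] (hlin : IsLinear 𝓔) {h₁ h₂ : Edge 𝓔 → V}
    (hh₁ : IsAcyclic 𝓔 h₁) (hh₂ : IsAcyclic 𝓔 h₂) :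
    FlipSeq 𝓔 h₁ h₂ (diffEdges h₁ h₂).card := by
  induction hn : (diffEdges h₁ h₂).card generalizing h₁ with
  | zero =>
    refine flipSeq_zero_iff.mpr (funext fun e => ?_)
    by_contra he
    exact Finset.card_ne_zero_of_mem (by simpa [diffEdges] using he) hn
  | succ n ih =>
    have hne : h₁ ≠ h₂ := by rintro rfl; simp [diffEdges] at hn
    obtain ⟨e, he, hacyc⟩ := exists_isAcyclic_update hlin hh₁ hh₂ hne
    have hcard : (diffEdges (Function.update h₁ e (h₂ e)) h₂).card = n := by
      rw [diffEdges_update, Finset.card_erase_of_mem (by simpa [diffEdges] using he), hn,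
        Nat.add_sub_cancel]
    exact flipSeq_succ_iff.mpr ⟨_, flipStep_update hlin hh₁.1 he hacyc, ih hacyc hcard⟩

theorem flipDist_eq_card_diff_of_linear_general {V : Type*} [DecidableEq V]
    (𝓔 : Finset (Finset V))
    (hlin : ∀ e₁ ∈ 𝓔, ∀ e₂ ∈ 𝓔, e₁ ≠ e₂ → (e₁ ∩ e₂).card ≤ 1)
    (h₁ h₂ : Edge 𝓔 → V) (hh₁ : IsAcyclic 𝓔 h₁) (hh₂ : IsAcyclic 𝓔 h₂) :
    flipDist 𝓔 h₁ h₂ = (Finset.univ.filter fun e : Edge 𝓔 => h₁ e ≠ h₂ e).card := by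
  have hseq := flipSeq_card_diffEdges hlin hh₁ hh₂
  exact le_antisymm (Nat.sInf_le hseq)
    (le_csInf ⟨_, hseq⟩ fun ℓ hℓ => card_diffEdges_le_of_flipSeq hlin hℓ)

/-- If `H` is a linear hypergraph (any two distinct hyperedges meet in at
most one vertex), then for any two acyclic orientations `h₁, h₂` of `H` the flip distance
equals `|{e ∈ 𝓔 : h₁(e) ≠ h₂(e)}|`. -/
theorem flipDist_eq_card_diff_of_linear {V : Type*} [DecidableEq V]
    (𝓔 : Finset (Finset V)) (hE : ∀ e ∈ 𝓔, e.Nonempty)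
    (hlin : ∀ e₁ ∈ 𝓔, ∀ e₂ ∈ 𝓔, e₁ ≠ e₂ → (e₁ ∩ e₂).card ≤ 1)
    (h₁ h₂ : Edge 𝓔 → V) (hh₁ : IsAcyclic 𝓔 h₁) (hh₂ : IsAcyclic 𝓔 h₂) :
    flipDist 𝓔 h₁ h₂ = (Finset.univ.filter fun e : Edge 𝓔 => h₁ e ≠ h₂ e).card :=
  flipDist_eq_card_diff_of_linear_general 𝓔 hlin h₁ h₂ hh₁ hh₂

end PaperFlip
end

section
/- Let h₁, h₂ be acyclic orientations of a hypergraph H and let e ∈ 𝓔 be a hyperedge with h₁(e) ≠ h₂(e). If the ordered pair (h₁(e), h₂(e)) is not flippable in h₁, then the digraph D_{h₁} contains a directed path of length at least two from h₂(e) to h₁(e). -/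
/-!
A hypergraph on vertex type `V` is given by a finite collection `𝓔` of nonempty
hyperedges (finsets of `V`).  An orientation assigns to each hyperedge a head
belonging to it.  `Arc 𝓔 h u v` is the arc relation of the digraph `D_h`, and an
orientation is acyclic if `D_h` has no directed cycle.  `flip 𝓔 h u v` is the
orientation `h^{(u,v)}`, and `(u, v)` is flippable in `h` if `h^{(u,v)}` is acyclic.
-/

namespace PaperFlip

variable {V : Type*} [DecidableEq V]

/-- Let `h₁, h₂` be acyclic orientations of a hypergraph and `e` a
hyperedge with `h₁ e ≠ h₂ e`.  If `(h₁ e, h₂ e)` is not flippable in `h₁`, then the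
digraph `D_{h₁}` contains a directed path of length at least two from `h₂ e` to `h₁ e`. -/
theorem exists_path_of_not_flippable {V : Type*} [DecidableEq V]
    (𝓔 : Finset (Finset V)) (hE : ∀ e ∈ 𝓔, e.Nonempty) (h₁ h₂ : Edge 𝓔 → V)
    (hh₁ : IsAcyclic 𝓔 h₁) (hh₂ : IsAcyclic 𝓔 h₂) (e : Edge 𝓔) (hne : h₁ e ≠ h₂ e)
    (hflip : ¬ Flippable 𝓔 h₁ (h₁ e) (h₂ e)) :
    ∃ w : V, Arc 𝓔 h₁ (h₂ e) w ∧ Relation.TransGen (Arc 𝓔 h₁) w (h₁ e) := by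
  classical
  set u := h₁ e with hu
  set v := h₂ e with hv
  set h' := flip 𝓔 h₁ u v with hh'
  have huv : u ≠ v := hne
  have horient : IsOrientation 𝓔 h' := by
    intro f
    simp only [hh', flip]
    split
    · exact (by assumption : u ∈ f.1 ∧ v ∈ f.1 ∧ h₁ f = u).2.1
    · exact hh₁.1 f
  -- arcs into a vertex ≠ v are h₁ arcs
  have arc_ne : ∀ x y, Arc 𝓔 h' x y → y ≠ v → Arc 𝓔 h₁ x y := by
    rintro x y ⟨f, hf, hxf, hxy⟩ hyv
    refine ⟨f, ?_, hxf, hxy⟩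
    simp only [hh', flip] at hf
    split at hf
    · exact absurd hf.symm hyv
    · exact hf
  -- arcs into v
  have arc_v : ∀ x, Arc 𝓔 h' x v → Arc 𝓔 h₁ x v ∨ x = u ∨ Arc 𝓔 h₁ x u := by
    rintro x ⟨f, hf, hxf, hxv⟩
    simp only [hh', flip] at hf
    split at hf
    · rename_i hc
      by_cases hxu : x = u
      · exact Or.inr (Or.inl hxu)
      · exact Or.inr (Or.inr ⟨f, hc.2.2, hxf, hxu⟩)
    · exact Or.inl ⟨f, hf, hxf, hxv⟩
  -- there is no h'-arc from v to u
  have no_vu : ¬ Arc 𝓔 h' v u := by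
    rintro ⟨f, hf, hvf, hvu⟩
    simp only [hh', flip] at hf
    split at hf
    · exact huv hf.symm
    · rename_i hc
      exact hc ⟨hf ▸ hh₁.1 f, hvf, hf⟩
  -- not flippable ⇒ h' has a cycle
  have hcyc : ∃ z, Relation.TransGen (Arc 𝓔 h') z z := by
    by_contra hno
    push_neg at hno
    exact hflip ⟨huv, horient, hno⟩
  obtain ⟨z, hz⟩ := hcyc
  -- every h'-path either is an h₁-path or passes through v
  have key : ∀ a b, Relation.TransGen (Arc 𝓔 h') a b →
      Relation.TransGen (Arc 𝓔 h₁) a b ∨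
      (Relation.ReflTransGen (Arc 𝓔 h') a v ∧ Relation.ReflTransGen (Arc 𝓔 h') v b) := by
    intro a b hab
    induction hab with
    | single harc =>
      rename_i c
      by_cases hcv : c = v
      · subst hcv
        exact Or.inr ⟨Relation.ReflTransGen.single harc, Relation.ReflTransGen.refl⟩
      · exact Or.inl (Relation.TransGen.single (arc_ne _ _ harc hcv))
    | tail hab harc ih =>
      rename_i b c
      rcases ih with h1 | ⟨hav, hvb⟩
      · by_cases hcv : c = v
        · subst hcv
          exact Or.inr ⟨hab.to_reflTransGen.tail harc, Relation.ReflTransGen.refl⟩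
        · exact Or.inl (h1.tail (arc_ne _ _ harc hcv))
      · exact Or.inr ⟨hav, hvb.tail harc⟩
  -- hence there is a cycle through v in h'
  have hvv : Relation.TransGen (Arc 𝓔 h') v v := by
    rcases key z z hz with h1 | ⟨hzv, hvz⟩
    · exact absurd h1 (hh₁.2 z)
    · exact Relation.TransGen.trans_right hvz (Relation.TransGen.trans_left hz hzv)
  -- key structural lemma about h'-paths ending at v
  have P : ∀ x, Relation.ReflTransGen (Arc 𝓔 h') x v →
      x = u ∨ Relation.TransGen (Arc 𝓔 h₁) x u ∨ Relation.ReflTransGen (Arc 𝓔 h₁) x v := by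
    intro x hx
    induction hx using Relation.ReflTransGen.head_induction_on with
    | refl => exact Or.inr (Or.inr Relation.ReflTransGen.refl)
    | head harc htail ih =>
      rename_i x' y'
      rcases ih with rfl | htg | hrt
      · exact Or.inr (Or.inl (Relation.TransGen.single (arc_ne _ _ harc huv)))
      · by_cases hyv : y' = v
        · subst hyv
          rcases arc_v _ harc with h1 | h1 | h1
          · exact Or.inr (Or.inl ((Relation.TransGen.single h1).trans htg))
          · exact Or.inl h1
          · exact Or.inr (Or.inl (Relation.TransGen.single h1))
        · exact Or.inr (Or.inl (Relation.TransGen.head (arc_ne _ _ harc hyv) htg))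
      · by_cases hyv : y' = v
        · subst hyv
          rcases arc_v _ harc with h1 | h1 | h1
          · exact Or.inr (Or.inr (Relation.ReflTransGen.single h1))
          · exact Or.inl h1
          · exact Or.inr (Or.inl (Relation.TransGen.single h1))
        · exact Or.inr (Or.inr (Relation.ReflTransGen.head (arc_ne _ _ harc hyv) hrt))
  -- decompose the cycle: first arc v → w, then path w → v
  obtain ⟨w, hvw, hwv⟩ := Relation.TransGen.head'_iff.mp hvv
  have hvnw : v ≠ w := by
    obtain ⟨f, _, _, h⟩ := hvw
    exact h
  have hw1 : Arc 𝓔 h₁ v w := arc_ne _ _ hvw (fun h => hvnw h.symm)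
  rcases P w hwv with rfl | htg | hrt
  · exact absurd hvw no_vu
  · exact ⟨w, hw1, htg⟩
  · exact absurd (Relation.TransGen.head' hw1 hrt) (hh₁.2 v)


end PaperFlip
end

section
/- Let a, b ∈ ℕⁿ with ∑_{i=1}^n a_i = ∑_{i=1}^n b_i = N, let l_i = min(a_i, b_i) and u_i = max(a_i, b_i), and let P = {x ∈ ℝⁿ : l_i ≤ x_i ≤ u_i for all i, and ∑_{i=1}^n x_i = N}. Two distinct vertices x and y of P are adjacent on the skeleton of P if and only if there exist indices i, j ∈ [n] with i ≠ j such that: y_k = x_k ∈ {l_k, u_k} for all k ∈ [n] with k ≠ i, j; y_j = x_j + δ; and y_i = x_i − δ, where δ = min(u_j − x_j, x_i − l_i). -/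
/-!
Moving along `e_j - e_i` preserves the coordinate sum, so a point of `P` whose coordinates `i ≠ j`
are both strictly between their bounds is the midpoint of two points of `P` on a line in that
direction. Hence a vertex has at most one such free coordinate, and if `[x, y]` is a face, every
such direction at a point of `[x, y]` is parallel to `y - x`. At the midpoint of `[x, y]` the
coordinates where `x` and `y` differ are free, which forces `x` and `y` to differ in exactly two
coordinates and every other coordinate to sit at a bound; `δ` is maximal since `y` is a vertex.
Conversely, the coordinates at a bound are pinned on every open segment of `P` meeting `[x, y]`,
so such a segment lies on the line through `x` in direction `e_j - e_i`. The trace of that line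
in `P` is `[x, y]`: `x` is one end of it because `x` is a vertex, `y` the other by the choice of `δ`.
-/

open Set

section Segment

variable {𝕜 E : Type*} [Field 𝕜] [LinearOrder 𝕜] [IsStrictOrderedRing 𝕜]
  [AddCommGroup E] [Module 𝕜 E]

theorem mem_Ioo_of_mem_openSegment {lo hi a b c : 𝕜} (ha : a ∈ Icc lo hi) (hb : b ∈ Icc lo hi)
    (hab : a ≠ b) (hc : c ∈ openSegment 𝕜 a b) : c ∈ Ioo lo hi := by
  rw [openSegment_eq_Ioo' hab] at hc
  exact ⟨(le_min ha.1 hb.1).trans_lt hc.1, hc.2.trans_le (max_le ha.2 hb.2)⟩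

theorem exists_sub_eq_smul_of_mem_segment {x y p q : E} (hp : p ∈ segment 𝕜 x y)
    (hq : q ∈ segment 𝕜 x y) : ∃ c : 𝕜, q - p = c • (y - x) := by
  rw [segment_eq_image'] at hp hq
  obtain ⟨s, -, rfl⟩ := hp
  obtain ⟨t, -, rfl⟩ := hq
  exact ⟨t - s, by module⟩

theorem IsExtreme.exists_eq_smul_sub {A : Set E} {x y m v : E}
    (h : IsExtreme 𝕜 A (segment 𝕜 x y)) (hm : m ∈ segment 𝕜 x y) (hsub : m - v ∈ A)
    (hadd : m + v ∈ A) : ∃ c : 𝕜, v = c • (y - x) := by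
  have hmv := mem_openSegment_sub_add (𝕜 := 𝕜) m v
  obtain ⟨c, hc⟩ := exists_sub_eq_smul_of_mem_segment
    (h.left_mem_of_mem_openSegment hsub hadd hm hmv)
    (h.right_mem_of_mem_openSegment hsub hadd hm hmv)
  refine ⟨c / 2, ?_⟩
  rw [div_eq_inv_mul, mul_smul, ← hc]
  module

theorem add_smul_mem_segment {x v : E} {t δ : 𝕜} (ht₀ : 0 ≤ t) (htδ : t ≤ δ) :
    x + t • v ∈ segment 𝕜 x (x + δ • v) := by
  rcases ht₀.eq_or_lt with rfl | ht
  · simpa using left_mem_segment 𝕜 x (x + δ • v)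
  have hδ := ht.trans_le htδ
  rw [segment_eq_image']
  refine ⟨t / δ, ⟨div_nonneg ht.le hδ.le, div_le_one_of_le₀ htδ hδ.le⟩, ?_⟩
  simp only [add_sub_cancel_left, smul_smul, div_mul_cancel₀ _ hδ.ne']

end Segment

theorem exists_lt_of_sum_eq_of_ne {ι M : Type*} [Fintype ι] [AddCommMonoid M] [LinearOrder M]
    [IsOrderedCancelAddMonoid M] {x y : ι → M} (hsum : ∑ k, x k = ∑ k, y k) (hxy : x ≠ y) :
    ∃ j, x j < y j := by
  by_contra! h
  exact hxy (funext fun k => ((Finset.sum_eq_sum_iff_of_le fun k _ => h k).1 hsum.symm k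
    (Finset.mem_univ k)).symm)

namespace PaperBox

section Flip

variable {ι : Type*} [DecidableEq ι] {i j k : ι}

def flipDir (i j : ι) : ι → ℝ :=
  Pi.single j 1 - Pi.single i 1

theorem flipDir_apply_left (hij : i ≠ j) : flipDir i j i = -1 := by
  simp [flipDir, hij]

theorem flipDir_apply_right (hij : i ≠ j) : flipDir i j j = 1 := by
  simp [flipDir, hij.symm]

theorem flipDir_apply_of_ne (hki : k ≠ i) (hkj : k ≠ j) : flipDir i j k = 0 := by
  simp [flipDir, hki, hkj]

theorem sum_flipDir [Fintype ι] (i j : ι) : ∑ k, flipDir i j k = 0 := by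
  simp [flipDir]

end Flip

section BoxSlice

variable {ι : Type*} [Fintype ι]

def boxSlice (l u : ι → ℝ) (N : ℝ) : Set (ι → ℝ) :=
  {x | (∀ i, l i ≤ x i ∧ x i ≤ u i) ∧ ∑ i, x i = N}

variable {l u : ι → ℝ} {N : ℝ}

theorem convex_boxSlice : Convex ℝ (boxSlice l u N) := by
  have h : boxSlice l u N = Icc l u ∩ {x | ∑ i, x i = N} := by
    ext x
    simp [boxSlice, Pi.le_def, forall_and]
  rw [h]
  exact (convex_Icc l u).inter <| convex_hyperplane
    ⟨fun _ _ => Finset.sum_add_distrib, fun _ _ => by simp [Finset.mul_sum]⟩ N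

theorem apply_eq_of_mem_openSegment {p q z : ι → ℝ} (hp : p ∈ boxSlice l u N)
    (hq : q ∈ boxSlice l u N) (hz : z ∈ openSegment ℝ p q) {k : ι}
    (hk : z k = l k ∨ z k = u k) : p k = z k := by
  have hzk : z k ∈ openSegment ℝ (p k) (q k) := Pi.openSegment_subset p q hz k (mem_univ k)
  by_cases hpq : p k = q k
  · rw [hpq, openSegment_same] at hzk
    rw [hpq, hzk]
  have := mem_Ioo_of_mem_openSegment (hp.1 k) (hq.1 k) hpq hzk
  rcases hk with h | h <;> rw [h] at this <;> simp at this

variable [DecidableEq ι] {i j : ι}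

theorem add_smul_flipDir_mem_boxSlice {m : ι → ℝ} {t : ℝ} (hm : m ∈ boxSlice l u N)
    (hij : i ≠ j) (hi : m i - t ∈ Icc (l i) (u i)) (hj : m j + t ∈ Icc (l j) (u j)) :
    m + t • flipDir i j ∈ boxSlice l u N := by
  refine ⟨fun k => ?_, ?_⟩
  · by_cases hki : k = i
    · subst hki; simpa [flipDir_apply_left hij, sub_eq_add_neg] using hi
    by_cases hkj : k = j
    · subst hkj; simpa [flipDir_apply_right hij] using hj
    simpa [flipDir_apply_of_ne hki hkj] using hm.1 k
  · simp [Finset.sum_add_distrib, ← Finset.mul_sum, sum_flipDir, hm.2]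

theorem exists_sub_add_smul_flipDir_mem_boxSlice {m : ι → ℝ} (hm : m ∈ boxSlice l u N)
    (hij : i ≠ j) (hi : m i ∈ Ioo (l i) (u i)) (hj : m j ∈ Ioo (l j) (u j)) :
    ∃ ε : ℝ, 0 < ε ∧
      m - ε • flipDir i j ∈ boxSlice l u N ∧ m + ε • flipDir i j ∈ boxSlice l u N := by
  set ε := min (min (m i - l i) (u i - m i)) (min (m j - l j) (u j - m j))
  have hε : 0 < ε := by simp only [ε, lt_min_iff, sub_pos]; exact ⟨hi, hj⟩
  have hεi : ε ≤ m i - l i ∧ ε ≤ u i - m i := le_min_iff.1 (min_le_left _ _)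
  have hεj : ε ≤ m j - l j ∧ ε ≤ u j - m j := le_min_iff.1 (min_le_right _ _)
  refine ⟨ε, hε, ?_, add_smul_flipDir_mem_boxSlice hm hij ⟨?_, ?_⟩ ⟨?_, ?_⟩⟩
  · rw [sub_eq_add_neg, ← neg_smul]
    refine add_smul_flipDir_mem_boxSlice hm hij ⟨?_, ?_⟩ ⟨?_, ?_⟩ <;> linarith
  all_goals linarith

theorem eq_of_mem_Ioo_of_mem_extremePoints {x : ι → ℝ}
    (hx : x ∈ (boxSlice l u N).extremePoints ℝ) (hi : x i ∈ Ioo (l i) (u i))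
    (hj : x j ∈ Ioo (l j) (u j)) : i = j := by
  by_contra hij
  obtain ⟨ε, hε, hsub, hadd⟩ := exists_sub_add_smul_flipDir_mem_boxSlice hx.1 hij hi hj
  have h := congrFun (hx.2 hsub hadd (mem_openSegment_sub_add x _)) j
  simp only [Pi.sub_apply, Pi.smul_apply, flipDir_apply_right hij, smul_eq_mul, mul_one,
    sub_eq_self] at h
  exact hε.ne' h

theorem eq_add_smul_flipDir {x r : ι → ℝ} (hij : i ≠ j) (hsum : ∑ k, r k = ∑ k, x k)
    (hagree : ∀ k, k ≠ i → k ≠ j → r k = x k) : r = x + (r j - x j) • flipDir i j := by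
  have hpair : (r i - x i) + (r j - x j) = 0 := by
    rw [← Fintype.sum_eq_add i j hij fun k hk => sub_eq_zero.2 (hagree k hk.1 hk.2),
      Finset.sum_sub_distrib, hsum, sub_self]
  funext k
  by_cases hki : k = i
  · subst hki
    simp only [Pi.add_apply, Pi.smul_apply, flipDir_apply_left hij, smul_eq_mul, mul_neg, mul_one,
      neg_sub]
    linarith
  by_cases hkj : k = j
  · subst hkj; simp [flipDir_apply_right hij]
  simp [flipDir_apply_of_ne hki hkj, hagree k hki hkj]

theorem apply_eq_of_isExtreme_segment {x y m : ι → ℝ} {s t w : ι}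
    (hface : IsExtreme ℝ (boxSlice l u N) (segment ℝ x y)) (hm : m ∈ segment ℝ x y)
    (hst : s ≠ t) (hs : m s ∈ Ioo (l s) (u s)) (ht : m t ∈ Ioo (l t) (u t))
    (hws : w ≠ s) (hwt : w ≠ t) : x w = y w := by
  obtain ⟨ε, hε, hsub, hadd⟩ :=
    exists_sub_add_smul_flipDir_mem_boxSlice (hface.subset hm) hst hs ht
  obtain ⟨c, hc⟩ := hface.exists_eq_smul_sub hm hsub hadd
  have hcs := congrFun hc s
  have hcw := congrFun hc w
  simp only [Pi.smul_apply, Pi.sub_apply, smul_eq_mul, flipDir_apply_left hst,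
    flipDir_apply_of_ne hws hwt, mul_zero] at hcs hcw
  have hc0 : c ≠ 0 := by rintro rfl; linarith
  linarith [(mul_eq_zero.1 hcw.symm).resolve_left hc0]

theorem flip_of_isExtreme_segment {x y : ι → ℝ} (hx : x ∈ (boxSlice l u N).extremePoints ℝ)
    (hy : y ∈ (boxSlice l u N).extremePoints ℝ) (hxy : x ≠ y)
    (hface : IsExtreme ℝ (boxSlice l u N) (segment ℝ x y)) :
    ∃ i j : ι, i ≠ j ∧
      (∀ k : ι, k ≠ i → k ≠ j → (y k = x k ∧ (x k = l k ∨ x k = u k))) ∧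
      y j = x j + min (u j - x j) (x i - l i) ∧ y i = x i - min (u j - x j) (x i - l i) := by
  have hsum : ∑ k, x k = ∑ k, y k := hx.1.2.trans hy.1.2.symm
  obtain ⟨j, hj⟩ := exists_lt_of_sum_eq_of_ne hsum hxy
  obtain ⟨i, hi⟩ := exists_lt_of_sum_eq_of_ne hsum.symm hxy.symm
  have hij : i ≠ j := by rintro rfl; exact lt_asymm hi hj
  have hm := midpoint_mem_segment (𝕜 := ℝ) x y
  have hfree : ∀ k, x k ≠ y k → midpoint ℝ x y k ∈ Ioo (l k) (u k) := fun k hk =>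
    mem_Ioo_of_mem_openSegment (hx.1.1 k) (hy.1.1 k) hk (midpoint_mem_openSegment (x k) (y k))
  have hfixed : ∀ k, k ≠ i → k ≠ j → midpoint ℝ x y k ∉ Ioo (l k) (u k) := fun k hki hkj hk =>
    hj.ne (apply_eq_of_isExtreme_segment hface hm hki hk (hfree i hi.ne') hkj.symm hij.symm)
  have hagree : ∀ k, k ≠ i → k ≠ j → y k = x k := fun k hki hkj => by
    by_contra hk
    exact hfixed k hki hkj (hfree k (Ne.symm hk))
  have hy_eq := eq_add_smul_flipDir hij hsum.symm hagree
  have hyi : y i = x i - (y j - x j) := by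
    simpa [flipDir_apply_left hij, sub_eq_add_neg] using congrFun hy_eq i
  have hδ : y j - x j = min (u j - x j) (x i - l i) := by
    refine le_antisymm (le_min (by linarith [(hy.1.1 j).2]) (by linarith [(hy.1.1 i).1])) ?_
    by_contra! h
    rw [lt_min_iff] at h
    exact hij (eq_of_mem_Ioo_of_mem_extremePoints hy ⟨by linarith, by linarith [(hx.1.1 i).2]⟩
      ⟨by linarith [(hx.1.1 j).1], by linarith⟩)
  refine ⟨i, j, hij, fun k hki hkj => ⟨hagree k hki hkj, ?_⟩, by linarith, by linarith⟩
  have hk := hfixed k hki hkj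
  rw [pi_midpoint_apply, hagree k hki hkj, midpoint_self] at hk
  exact (eq_endpoints_or_mem_Ioo_of_mem_Icc (hx.1.1 k)).imp_right (Or.resolve_right · hk)

theorem isExtreme_segment_of_flip {x y : ι → ℝ} (hx : x ∈ (boxSlice l u N).extremePoints ℝ)
    (hy : y ∈ boxSlice l u N) (hxy : x ≠ y) (hij : i ≠ j)
    (hk : ∀ k : ι, k ≠ i → k ≠ j → (y k = x k ∧ (x k = l k ∨ x k = u k)))
    (hyj : y j = x j + min (u j - x j) (x i - l i)) :
    IsExtreme ℝ (boxSlice l u N) (segment ℝ x y) := by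
  set δ := min (u j - x j) (x i - l i)
  have hy_eq : y = x + δ • flipDir i j := by
    rw [eq_add_smul_flipDir hij (hy.2.trans hx.1.2.symm) fun k hki hkj => (hk k hki hkj).1, hyj,
      add_sub_cancel_left]
  have hδpos : 0 < δ := by
    refine lt_of_le_of_ne (le_min (by linarith [(hx.1.1 j).2]) (by linarith [(hx.1.1 i).1])) ?_
    rintro h
    exact hxy (by rw [hy_eq, ← h, zero_smul, add_zero])
  have hend : x j = l j ∨ x i = u i := by
    by_contra! h
    have := min_le_left (u j - x j) (x i - l i)
    have := min_le_right (u j - x j) (x i - l i)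
    exact hij (eq_of_mem_Ioo_of_mem_extremePoints hx
      ⟨by linarith, (hx.1.1 i).2.lt_of_ne h.2⟩ ⟨(hx.1.1 j).1.lt_of_ne' h.1, by linarith⟩)
  refine ⟨convex_boxSlice.segment_subset hx.1 hy, fun p hp q hq z hz hzpq => ?_⟩
  have hpk : ∀ k, k ≠ i → k ≠ j → p k = x k := fun k hki hkj => by
    obtain ⟨hyk, hxk⟩ := hk k hki hkj
    have hzk : z k = x k := by
      simpa [hyk] using Pi.segment_subset x y hz k (mem_univ k)
    rw [← hzk] at hxk ⊢
    exact apply_eq_of_mem_openSegment hp hq hzpq hxk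
  have hp_eq := eq_add_smul_flipDir hij (hp.2.trans hx.1.2.symm) hpk
  have hpi : p i = x i - (p j - x j) := by
    simpa [flipDir_apply_left hij, sub_eq_add_neg] using congrFun hp_eq i
  rw [hp_eq, hy_eq]
  refine add_smul_mem_segment ?_ (le_min (by linarith [(hp.1 j).2]) (by linarith [(hp.1 i).1]))
  rcases hend with h | h
  · linarith [(hp.1 j).1]
  · linarith [(hp.1 i).2]

end BoxSlice

theorem skeleton_adj_iff_flip_general (n : ℕ) (N : ℕ)
    (l u : Fin n → ℝ)
    (P : Set (Fin n → ℝ))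
    (hP : P = {x : Fin n → ℝ | (∀ i, l i ≤ x i ∧ x i ≤ u i) ∧ ∑ i, x i = (N : ℝ)})
    (x y : Fin n → ℝ) (hx : x ∈ P.extremePoints ℝ) (hy : y ∈ P.extremePoints ℝ)
    (hxy : x ≠ y) :
    IsExtreme ℝ P (segment ℝ x y) ↔
      ∃ i j : Fin n, i ≠ j ∧
        (∀ k : Fin n, k ≠ i → k ≠ j → (y k = x k ∧ (x k = l k ∨ x k = u k))) ∧
        y j = x j + min (u j - x j) (x i - l i) ∧
        y i = x i - min (u j - x j) (x i - l i) := by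
  obtain rfl : P = boxSlice l u N := hP
  refine ⟨flip_of_isExtreme_segment hx hy hxy, ?_⟩
  rintro ⟨i, j, hij, hk, hyj, -⟩
  exact isExtreme_segment_of_flip hx hy.1 hxy hij hk hyj

/-- Let `P = {x ∈ ℝⁿ : lᵢ ≤ xᵢ ≤ uᵢ, ∑ xᵢ = N}` where
`lᵢ = min(aᵢ, bᵢ)` and `uᵢ = max(aᵢ, bᵢ)` for `a, b ∈ ℕⁿ` of common coordinate sum `N`.
Two distinct vertices `x, y` of `P` are adjacent on the skeleton of `P` (i.e. the segment
`conv{x,y}` is an extreme subset of `P`) iff there are indices `i ≠ j` such that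
`y_k = x_k ∈ {l_k, u_k}` for all `k ≠ i, j`, `y_j = x_j + δ` and `y_i = x_i - δ`, where
`δ = min(u_j - x_j, x_i - l_i)`. -/
theorem skeleton_adj_iff_flip (n : ℕ) (a b : Fin n → ℕ) (N : ℕ)
    (ha : ∑ i, a i = N) (hb : ∑ i, b i = N)
    (l u : Fin n → ℝ)
    (hl : ∀ i, l i = min (a i : ℝ) (b i : ℝ)) (hu : ∀ i, u i = max (a i : ℝ) (b i : ℝ))
    (P : Set (Fin n → ℝ))
    (hP : P = {x : Fin n → ℝ | (∀ i, l i ≤ x i ∧ x i ≤ u i) ∧ ∑ i, x i = (N : ℝ)})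
    (x y : Fin n → ℝ) (hx : x ∈ P.extremePoints ℝ) (hy : y ∈ P.extremePoints ℝ)
    (hxy : x ≠ y) :
    IsExtreme ℝ P (segment ℝ x y) ↔
      ∃ i j : Fin n, i ≠ j ∧
        (∀ k : Fin n, k ≠ i → k ≠ j → (y k = x k ∧ (x k = l k ∨ x k = u k))) ∧
        y j = x j + min (u j - x j) (x i - l i) ∧
        y i = x i - min (u j - x j) (x i - l i) :=
  skeleton_adj_iff_flip_general n N l u P hP x y hx hy hxy

end PaperBox
end

section
/- Let a, b ∈ ℕⁿ with ∑_{i=1}^n a_i = ∑_{i=1}^n b_i = N, let l_i = min(a_i, b_i) and u_i = max(a_i, b_i), and let P = {x ∈ ℝⁿ : l_i ≤ x_i ≤ u_i for all i, and ∑_{i=1}^n x_i = N}. Define f : 2^[n] → ℝ by f(U) = min( N − ∑_{i∈[n]\U} l_i , ∑_{i∈U} u_i ). Then f is submodular, and P = {x ∈ ℝⁿ : ∑_{i∈U} x_i ≤ f(U) for all U ⊆ [n], and ∑_{i∈[n]} x_i = f([n])}. -/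
namespace PaperBox

/-- With `lᵢ = min(aᵢ, bᵢ)`, `uᵢ = max(aᵢ, bᵢ)` and
`P = {x ∈ ℝⁿ : lᵢ ≤ xᵢ ≤ uᵢ, ∑ xᵢ = N}`, the function
`f(U) = min(N - ∑_{i∉U} lᵢ, ∑_{i∈U} uᵢ)` is submodular and
`P = {x : ∑_{i∈U} xᵢ ≤ f(U) for all U, ∑ᵢ xᵢ = f([n])}`. -/
theorem box_polytope_submodular (n : ℕ) (a b : Fin n → ℕ) (N : ℕ)
    (ha : ∑ i, a i = N) (hb : ∑ i, b i = N)
    (l u : Fin n → ℝ)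
    (hl : ∀ i, l i = min (a i : ℝ) (b i : ℝ)) (hu : ∀ i, u i = max (a i : ℝ) (b i : ℝ))
    (f : Finset (Fin n) → ℝ)
    (hf : ∀ U : Finset (Fin n), f U = min ((N : ℝ) - ∑ i ∈ Uᶜ, l i) (∑ i ∈ U, u i)) :
    (∀ T U : Finset (Fin n), f (T ∩ U) + f (T ∪ U) ≤ f T + f U) ∧
    {x : Fin n → ℝ | (∀ i, l i ≤ x i ∧ x i ≤ u i) ∧ ∑ i, x i = (N : ℝ)} =
      {x : Fin n → ℝ | (∀ U : Finset (Fin n), ∑ i ∈ U, x i ≤ f U) ∧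
        ∑ i, x i = f Finset.univ} := by
  have hlu : ∀ i, l i ≤ u i := fun i => by rw [hl, hu]; exact min_le_max
  have hNu : (N : ℝ) ≤ ∑ i, u i := by
    calc (N : ℝ) = ∑ i, (a i : ℝ) := by rw [← ha]; push_cast; ring
    _ ≤ ∑ i, u i := Finset.sum_le_sum fun i _ => by rw [hu]; exact le_max_left _ _
  have hsumcompl : ∀ (g : Fin n → ℝ) (U : Finset (Fin n)),
      ∑ i ∈ Uᶜ, g i = ∑ i, g i - ∑ i ∈ U, g i := by
    intro g U
    have := Finset.sum_compl_add_sum U g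
    linarith
  have cross : ∀ T U : Finset (Fin n),
      (∑ i ∈ T ∩ U, u i) + (∑ i ∈ T ∪ U, l i) ≤ (∑ i ∈ T, l i) + ∑ i ∈ U, u i := by
    intro T U
    have e1 : ∑ i ∈ T ∪ U, l i = ∑ i ∈ T, l i + ∑ i ∈ U \ T, l i := by
      rw [← Finset.union_sdiff_self_eq_union, Finset.sum_union disjoint_sdiff_self_right]
    have e2 : ∑ i ∈ U, u i = ∑ i ∈ T ∩ U, u i + ∑ i ∈ U \ T, u i := by
      rw [Finset.inter_comm, ← Finset.sum_inter_add_sum_sdiff U T u]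
    have e3 : ∑ i ∈ U \ T, l i ≤ ∑ i ∈ U \ T, u i :=
      Finset.sum_le_sum fun i _ => hlu i
    linarith
  have hfuniv : f Finset.univ = (N : ℝ) := by
    rw [hf]
    simp [Finset.compl_univ, min_eq_left hNu]
  constructor
  · intro T U
    have hA := Finset.sum_union_inter (s₁ := T) (s₂ := U) (f := l)
    have hB := Finset.sum_union_inter (s₁ := T) (s₂ := U) (f := u)
    have c1 := cross T U
    have c2 := cross U T
    rw [Finset.inter_comm, Finset.union_comm] at c2
    rw [hf, hf, hf, hf, hsumcompl l (T ∩ U), hsumcompl l (T ∪ U), hsumcompl l T,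
      hsumcompl l U]
    rcases min_cases ((N : ℝ) - (∑ i, l i - ∑ i ∈ T, l i)) (∑ i ∈ T, u i) with ⟨h3, _⟩ | ⟨h3, _⟩ <;>
      rcases min_cases ((N : ℝ) - (∑ i, l i - ∑ i ∈ U, l i)) (∑ i ∈ U, u i) with ⟨h4, _⟩ | ⟨h4, _⟩ <;>
      rw [h3, h4] <;>
      [ linarith [min_le_left ((N : ℝ) - (∑ i, l i - ∑ i ∈ T ∩ U, l i)) (∑ i ∈ T ∩ U, u i),
          min_le_left ((N : ℝ) - (∑ i, l i - ∑ i ∈ T ∪ U, l i)) (∑ i ∈ T ∪ U, u i)];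
        linarith [min_le_right ((N : ℝ) - (∑ i, l i - ∑ i ∈ T ∩ U, l i)) (∑ i ∈ T ∩ U, u i),
          min_le_left ((N : ℝ) - (∑ i, l i - ∑ i ∈ T ∪ U, l i)) (∑ i ∈ T ∪ U, u i)];
        linarith [min_le_right ((N : ℝ) - (∑ i, l i - ∑ i ∈ T ∩ U, l i)) (∑ i ∈ T ∩ U, u i),
          min_le_left ((N : ℝ) - (∑ i, l i - ∑ i ∈ T ∪ U, l i)) (∑ i ∈ T ∪ U, u i)];
        linarith [min_le_right ((N : ℝ) - (∑ i, l i - ∑ i ∈ T ∩ U, l i)) (∑ i ∈ T ∩ U, u i),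
          min_le_right ((N : ℝ) - (∑ i, l i - ∑ i ∈ T ∪ U, l i)) (∑ i ∈ T ∪ U, u i)] ]
  · ext x
    simp only [Set.mem_setOf_eq]
    constructor
    · rintro ⟨hbox, hsum⟩
      refine ⟨fun U => ?_, by rw [hfuniv]; exact hsum⟩
      rw [hf]
      refine le_min ?_ (Finset.sum_le_sum fun i _ => (hbox i).2)
      have h1 := Finset.sum_compl_add_sum U x
      have h2 : ∑ i ∈ Uᶜ, l i ≤ ∑ i ∈ Uᶜ, x i :=
        Finset.sum_le_sum fun i _ => (hbox i).1
      linarith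
    · rintro ⟨hU, hs⟩
      rw [hfuniv] at hs
      refine ⟨fun i => ⟨?_, ?_⟩, hs⟩
      · have h2 := hU ({i}ᶜ)
        rw [hf] at h2
        have h3 := h2.trans (min_le_left _ _)
        rw [compl_compl, Finset.sum_singleton] at h3
        have h4 := Finset.sum_compl_add_sum ({i} : Finset (Fin n)) x
        rw [Finset.sum_singleton] at h4
        linarith
      · have h1 := hU {i}
        rw [hf] at h1
        have h2 := h1.trans (min_le_right _ _)
        rw [Finset.sum_singleton, Finset.sum_singleton] at h2
        exact h2
  

end PaperBox
end

section
/- Let P ⊆ ℝⁿ be a polytope. The following statements are equivalent: (1) every edge of P is parallel to e_j − e_i for some pair i, j ∈ [n], where e_i denotes the i-th standard basis vector of ℝⁿ; (2) there exists a submodular function f : 2^[n] → ℝ such that P = P_f = {x ∈ ℝⁿ : ∑_{i∈U} x_i ≤ f(U) for all U ⊆ [n], and ∑_{i∈[n]} x_i = f([n])}. -/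
/-!
Put `f U := max_{x ∈ P} ∑_{i ∈ U} x i`. A vertex of a polytope with no improving edge maximizes
the functional (the vertex figure at `x` is a polytope whose extreme points span the edges at `x`).
If every edge is parallel to some `e_j - e_i`, then for a chain `𝒞` of sets an edge that increases
one `∑_{S}` decreases no other `∑_{S'}`, `S, S' ∈ 𝒞`; so a vertex maximizing `∑_{S ∈ 𝒞} ∑_S`
maximizes each of them. The chain `{T ∩ U, T ∪ U}` gives submodularity of `f`, and the chain of
upper level sets of a functional separating a point of `P_f` from `P` gives a contradiction by
writing the functional as a multiple of the all-ones vector plus a nonnegative combination of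
indicators of its level sets.

Conversely, let `[x, y]` be an edge of `P_f` with midpoint `m`. By submodularity the sets tight at
`m` form a lattice, and `y - x` sums to zero on each of them. The atom of a coordinate where
`y - x` is nonzero then has a second element, giving `i ≠ j` separated by no tight set. Moving `m`
in the direction `± (e_i - e_j)` keeps it in `P_f`, so that direction is parallel to the edge.
-/

open Set Finset Filter Topology

namespace PaperPolymatroid

theorem _root_.IsExtreme.exists_eq_smul_sub_s9 {E : Type*} [AddCommGroup E] [Module ℝ E]
    {P : Set E} {x y m v : E} (h : IsExtreme ℝ P (segment ℝ x y)) (hm : m ∈ segment ℝ x y)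
    (h₁ : m + v ∈ P) (h₂ : m - v ∈ P) : ∃ r : ℝ, v = r • (y - x) := by
  have hmid : m ∈ openSegment ℝ (m + v) (m - v) :=
    ⟨1 / 2, 1 / 2, by norm_num, by norm_num, by norm_num, by module⟩
  have hmv := h.2 h₁ h₂ hm hmid
  rw [segment_eq_image'] at hm hmv
  obtain ⟨θ, -, hθ⟩ := hm
  obtain ⟨θ', -, hθ'⟩ := hmv
  exact ⟨θ' - θ, by linear_combination (norm := module) hθ - hθ'⟩

section Polytope

variable {E : Type*} [AddCommGroup E] [Module ℝ E] [TopologicalSpace E]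

theorem isExtreme_setOf_sub_eq_smul {P : Set E} {x b : E} {g : StrongDual ℝ E}
    (hg : ∀ p ∈ P, p ≠ x → g x < g p ∧ x + (g p - g x)⁻¹ • (p - x) ∈ P)
    (hb : b ∈ {r ∈ P | g r = g x + 1}.extremePoints ℝ) :
    IsExtreme ℝ P {p ∈ P | p - x = (g p - g x) • (b - x)} := by
  have hray : ∀ p ∈ P, ∃ r ∈ {r ∈ P | g r = g x + 1},
      p - x = (g p - g x) • (r - x) ∧ 0 ≤ g p - g x := by
    intro p hp
    by_cases hpx : p = x
    · exact ⟨b, hb.1, by simp [hpx]⟩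
    obtain ⟨hlt, hr⟩ := hg p hp hpx
    have hne : g p - g x ≠ 0 := (sub_pos.2 hlt).ne'
    refine ⟨_, ⟨hr, ?_⟩, ?_, (sub_pos.2 hlt).le⟩
    · simp only [map_add, map_smul, map_sub, smul_eq_mul, inv_mul_cancel₀ hne]
    · rw [add_sub_cancel_left, smul_smul, mul_inv_cancel₀ hne, one_smul]
  refine ⟨fun p hp => hp.1, ?_⟩
  rintro p hp q hq ξ ⟨-, hξ⟩ ⟨a, c, ha, hc, hac, rfl⟩
  refine ⟨hp, ?_⟩
  obtain ⟨rp, hrp, hp', hφp⟩ := hray p hp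
  obtain ⟨rq, hrq, hq', hφq⟩ := hray q hq
  set φp := g p - g x
  set φq := g q - g x
  rcases hφp.eq_or_lt with h0 | hφp
  · rw [hp', ← h0, zero_smul, zero_smul]
  suffices rp = b by rw [hp', this]
  have hφ : 0 < a * φp + c * φq := by positivity
  -- projecting from `x` to level `g x + 1` sends `a • p + c • q` to `b` and `p`, `q` to `rp`, `rq`
  have hb' : b = (a * φp / (a * φp + c * φq)) • rp + (c * φq / (a * φp + c * φq)) • rq := by
    have hgξ : g (a • p + c • q) - g x = a * φp + c * φq := by
      simp only [map_add, map_smul, smul_eq_mul, φp, φq]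
      linear_combination g x * hac
    rw [hgξ] at hξ
    have : (a * φp + c * φq) • (b - x) = (a * φp) • (rp - x) + (c * φq) • (rq - x) := by
      rw [← hξ, mul_smul, mul_smul, ← hp', ← hq']
      linear_combination (norm := module) hac • x
    apply smul_right_injective E hφ.ne'
    simp only [smul_add, smul_smul, mul_div_cancel₀ _ hφ.ne']
    linear_combination (norm := module) this
  rcases hφq.eq_or_lt with h0 | hφq
  · rw [← h0, mul_zero, add_zero, div_self (by positivity), zero_div, zero_smul, add_zero,
      one_smul] at hb'
    exact hb'.symm
  · exact hb.2 hrp hrq ⟨_, _, by positivity, by positivity, by field_simp, hb'.symm⟩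

theorem setOf_sub_eq_smul_eq_segment {P : Set E} (hP : Convex ℝ P) {x b y : E}
    {g : StrongDual ℝ E} (hxP : x ∈ P) (hgP : ∀ p ∈ P, g x ≤ g p)
    (hy : y ∈ {p ∈ P | p - x = (g p - g x) • (b - x)})
    (hymax : IsMaxOn g {p ∈ P | p - x = (g p - g x) • (b - x)} y) (hgy : g x < g y) :
    {p ∈ P | p - x = (g p - g x) • (b - x)} = segment ℝ x y := by
  refine Subset.antisymm (fun p hp => ?_) fun p hp => ?_
  · have hpy : g p ≤ g y := isMaxOn_iff.1 hymax p hp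
    have hgp := hgP p hp.1
    rw [segment_eq_image']
    refine ⟨(g p - g x) / (g y - g x), ⟨div_nonneg (by linarith) (by linarith),
      div_le_one_of_le₀ (by linarith) (by linarith)⟩, ?_⟩
    show x + _ • (y - x) = p
    rw [hy.2, smul_smul, div_mul_cancel₀ _ (by linarith), ← hp.2, add_sub_cancel]
  · rw [segment_eq_image'] at hp
    obtain ⟨θ, hθ, rfl⟩ := hp
    refine ⟨hP.segment_subset hxP hy.1 ?_, ?_⟩
    · rw [segment_eq_image']; exact ⟨θ, hθ, rfl⟩
    · have hgθ : g (x + θ • (y - x)) - g x = θ * (g y - g x) := by simp [map_sub]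
      rw [hgθ, add_sub_cancel_left, hy.2, smul_smul]

theorem le_sup'_of_mem_convexHull {s : Finset E} (hs : s.Nonempty) (l : StrongDual ℝ E) {p : E}
    (hp : p ∈ convexHull ℝ (s : Set E)) : l p ≤ s.sup' hs l :=
  (l.toLinearMap.convexOn convex_univ).le_sup_of_mem_convexHull (subset_univ _) hp

theorem sup'_eq_of_isMaxOn {s : Finset E} (hs : s.Nonempty) {l : StrongDual ℝ E} {x : E}
    (hx : x ∈ convexHull ℝ (s : Set E)) (hmax : IsMaxOn l (convexHull ℝ (s : Set E)) x) :
    s.sup' hs l = l x :=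
  le_antisymm (sup'_le _ _ fun _ hp => hmax (subset_convexHull ℝ _ hp))
    (le_sup'_of_mem_convexHull hs l hx)

variable [T2Space E] [IsTopologicalAddGroup E] [ContinuousSMul ℝ E] [LocallyConvexSpace ℝ E]

theorem _root_.IsCompact.exists_mem_extremePoints_isMaxOn {K : Set E} (hK : IsCompact K)
    (hne : K.Nonempty) (l : StrongDual ℝ E) : ∃ x ∈ K.extremePoints ℝ, IsMaxOn l K x := by
  have hF : IsExposed ℝ K (l.toExposed K) := ContinuousLinearMap.toExposed.isExposed
  obtain ⟨z, hzK, hz⟩ := hK.exists_isMaxOn hne l.continuous.continuousOn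
  obtain ⟨x, hx⟩ := (hF.isCompact hK).extremePoints_nonempty ⟨z, hzK, hz⟩
  exact ⟨x, hF.isExtreme.extremePoints_subset_extremePoints hx, hx.1.2⟩

theorem exists_functional_of_mem_extremePoints_convexHull {s : Finset E} {x : E}
    (hx : x ∈ (convexHull ℝ (s : Set E)).extremePoints ℝ) :
    ∃ g : StrongDual ℝ E, ∀ p ∈ convexHull ℝ (s : Set E), p ≠ x →
      g x < g p ∧ x + (g p - g x)⁻¹ • (p - x) ∈ convexHull ℝ (s : Set E) := by
  classical
  have hxs : x ∈ s := extremePoints_convexHull_subset hx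
  set t := s.erase x
  have hs : (s : Set E) = insert x ↑t := by rw [← coe_insert, insert_erase hxs]
  rcases t.eq_empty_or_nonempty with ht | ht
  · refine ⟨0, fun p hp hpx => absurd ?_ hpx⟩
    rwa [hs, ht, coe_empty, insert_empty_eq, convexHull_singleton] at hp
  have hxt : x ∉ convexHull ℝ (t : Set E) := by
    have hsub : (t : Set E) ⊆ convexHull ℝ ↑s \ {x} := fun p hp =>
      ⟨subset_convexHull ℝ _ (mem_of_mem_erase (mem_coe.1 hp)), ne_of_mem_erase (mem_coe.1 hp)⟩
    exact fun hxt => ((convex_convexHull ℝ _).mem_extremePoints_iff_mem_sdiff_convexHull_sdiff.1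
      hx).2 (convexHull_mono hsub hxt)
  obtain ⟨f, u, hfx, hfu⟩ := geometric_hahn_banach_point_closed (convex_convexHull ℝ _)
    (t.finite_toSet.isClosed_convexHull ℝ) hxt
  -- normalized so that the rest of the polytope lies above level `g x + 1`
  set g := (u - f x)⁻¹ • f
  have hgap : ∀ q ∈ convexHull ℝ (t : Set E), 1 < g q - g x := fun q hq => by
    simp only [g, FunLike.coe_smul, Pi.smul_apply, smul_eq_mul, ← mul_sub]
    rw [inv_mul_eq_div, one_lt_div (by linarith)]; linarith [hfu q hq]
  refine ⟨g, fun p hp hpx => ?_⟩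
  rw [hs, convexHull_insert (coe_nonempty.2 ht), convexJoin_singleton_left] at hp
  obtain ⟨q, hq, θ, ⟨hθ0, hθ1⟩, rfl⟩ : ∃ q ∈ convexHull ℝ (t : Set E),
      ∃ θ ∈ Icc (0 : ℝ) 1, x + θ • (q - x) = p := by
    simpa [segment_eq_image'] using hp
  have hθ : 0 < θ := hθ0.lt_of_ne' (by rintro rfl; simp at hpx)
  have hgp : g (x + θ • (q - x)) - g x = θ * (g q - g x) := by simp [map_sub]
  have hq1 := hgap q hq
  refine ⟨by nlinarith, ?_⟩
  have hray : x + (g q - g x)⁻¹ • (q - x) ∈ convexHull ℝ (s : Set E) := by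
    refine (convex_convexHull ℝ _).segment_subset (subset_convexHull ℝ _ (mem_coe.2 hxs))
      ((convexHull_mono (by simp [hs])) hq) ?_
    rw [segment_eq_image']
    exact ⟨_, ⟨by positivity, inv_le_one_of_one_le₀ hq1.le⟩, rfl⟩
  convert hray using 2
  rw [hgp, add_sub_cancel_left, smul_smul]
  congr 1
  field_simp

theorem exists_isExtreme_segment_lt {s : Finset E} {x z : E} {l : StrongDual ℝ E}
    (hx : x ∈ (convexHull ℝ (s : Set E)).extremePoints ℝ) (hz : z ∈ convexHull ℝ (s : Set E))
    (hlt : l x < l z) :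
    ∃ y ≠ x, IsExtreme ℝ (convexHull ℝ (s : Set E)) (segment ℝ x y) ∧ l x < l y := by
  set P := convexHull ℝ (s : Set E)
  have hPc : IsCompact P := s.finite_toSet.isCompact_convexHull ℝ
  obtain ⟨g, hg⟩ := exists_functional_of_mem_extremePoints_convexHull hx
  have hgP : ∀ p ∈ P, g x ≤ g p := fun p hp => by
    rcases eq_or_ne p x with rfl | hpx
    exacts [le_rfl, (hg p hp hpx).1.le]
  set Q := {r ∈ P | g r = g x + 1}
  have hQc : IsCompact Q := hPc.inter_right (isClosed_eq g.continuous continuous_const)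
  obtain ⟨hgz, hrz⟩ := hg z hz (by rintro rfl; exact hlt.false)
  set rz := x + (g z - g x)⁻¹ • (z - x)
  have hrzQ : rz ∈ Q := ⟨hrz, by simp [rz, inv_mul_cancel₀ (sub_pos.2 hgz).ne']⟩
  obtain ⟨b, hb, hbmax⟩ := hQc.exists_mem_extremePoints_isMaxOn ⟨rz, hrzQ⟩ l
  have hlb : l x < l b := by
    refine lt_of_lt_of_le ?_ (hbmax hrzQ)
    simpa [rz] using mul_pos (inv_pos.2 (sub_pos.2 hgz)) (sub_pos.2 hlt)
  set F := {p ∈ P | p - x = (g p - g x) • (b - x)}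
  have hFc : IsCompact F := hPc.inter_right <| isClosed_eq (by fun_prop) (by fun_prop)
  have hbF : b ∈ F := ⟨hb.1.1, by simp [hb.1.2]⟩
  obtain ⟨y, hyF, hymax⟩ := hFc.exists_isMaxOn ⟨b, hbF⟩ g.continuous.continuousOn
  have hgy : g x < g y := by linarith [isMaxOn_iff.1 hymax b hbF, hb.1.2]
  refine ⟨y, by rintro rfl; exact hgy.false, ?_, ?_⟩
  · rw [← setOf_sub_eq_smul_eq_segment (convex_convexHull ℝ _) hx.1 hgP hyF hymax hgy]
    exact isExtreme_setOf_sub_eq_smul hg hb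
  · have hly : l y - l x = (g y - g x) * (l b - l x) := by
      simpa [map_sub] using congrArg l hyF.2
    nlinarith

theorem isMaxOn_of_forall_isExtreme_segment {s : Finset E} {x : E} {l : StrongDual ℝ E}
    (hx : x ∈ (convexHull ℝ (s : Set E)).extremePoints ℝ)
    (h : ∀ y ≠ x, IsExtreme ℝ (convexHull ℝ (s : Set E)) (segment ℝ x y) → l y ≤ l x) :
    IsMaxOn l (convexHull ℝ (s : Set E)) x := fun _ hz => not_lt.1 fun hlt =>
  let ⟨y, hyx, hext, hly⟩ := exists_isExtreme_segment_lt hx hz hlt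
  (h y hyx hext).not_gt hly

theorem eq_of_forall_isExtreme_segment {s : Finset E} (hs : s.Nonempty) {l : StrongDual ℝ E}
    (h : ∀ x y, x ≠ y → IsExtreme ℝ (convexHull ℝ (s : Set E)) (segment ℝ x y) → l x = l y)
    {p q : E} (hp : p ∈ convexHull ℝ (s : Set E)) (hq : q ∈ convexHull ℝ (s : Set E)) :
    l p = l q := by
  obtain ⟨x, hx, hmax⟩ := (s.finite_toSet.isCompact_convexHull ℝ).exists_mem_extremePoints_isMaxOn
    (convexHull_nonempty_iff.2 (coe_nonempty.2 hs)) l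
  have hmin : IsMaxOn (-l) (convexHull ℝ (s : Set E)) x :=
    isMaxOn_of_forall_isExtreme_segment hx fun y hyx hext => by simp [h x y hyx.symm hext]
  have hconst : ∀ p ∈ convexHull ℝ (s : Set E), l p = l x := fun p hp =>
    le_antisymm (hmax hp) (by simpa using hmin hp)
  rw [hconst p hp, hconst q hq]

end Polytope

section SetFunctions

variable {ι : Type*} [Fintype ι]

theorem sum_mul_nonneg_of_sum_filter_le_nonneg (w d : ι → ℝ)
    (hd : ∀ t, 0 ≤ ∑ i with t ≤ w i, d i) (hsum : ∑ i, d i = 0) : 0 ≤ ∑ i, w i * d i := by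
  classical
  suffices ∀ V : Finset ℝ, ∀ w : ι → ℝ, (∀ i, w i ∈ V) → (∀ t, 0 ≤ ∑ i with t ≤ w i, d i) →
      0 ≤ ∑ i, w i * d i from
    this _ w (fun i => mem_image_of_mem w (mem_univ i)) hd
  intro V
  induction V using Finset.induction_on_max with
  | empty =>
    intro w hw _
    have : IsEmpty ι := ⟨fun i => notMem_empty _ (hw i)⟩
    simp
  | insert a V hlt ih =>
    intro w hw hd
    rcases V.eq_empty_or_nonempty with rfl | hV
    · simp_all [← Finset.mul_sum]
    -- lower the top level `a` of `w` to the next one `a'`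
    set a' := V.max' hV
    have ha' : a' < a := hlt a' (V.max'_mem hV)
    have hsplit : ∑ i, w i * d i =
        ∑ i, min (w i) a' * d i + (a - a') * ∑ i with a ≤ w i, d i := by
      rw [sum_filter, mul_sum, ← sum_add_distrib]
      refine sum_congr rfl fun i _ => ?_
      rcases mem_insert.1 (hw i) with hi | hi
      · simp [hi, ha'.le]; ring
      · have : w i ≤ a' := V.le_max' _ hi
        simp [this, (this.trans_lt ha').not_ge]
    rw [hsplit]
    refine add_nonneg (ih _ (fun i => ?_) fun t => ?_) (mul_nonneg (by linarith) (hd a))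
    · rcases mem_insert.1 (hw i) with hi | hi
      · simpa [hi, ha'.le] using V.max'_mem hV
      · rwa [min_eq_left (V.le_max' _ hi)]
    · by_cases ht : t ≤ a'
      · simpa [le_min_iff, ht] using hd t
      · simp [ht]

variable [DecidableEq ι]

theorem exists_ne_forall_mem_iff_of_isSublattice {𝒯 : Set (Finset ι)} (h𝒯 : IsSublattice 𝒯)
    (hbot : (∅ : Finset ι) ∈ 𝒯) (htop : (univ : Finset ι) ∈ 𝒯) {d : ι → ℝ}
    (hd : ∀ U ∈ 𝒯, ∑ i ∈ U, d i = 0) (hd0 : d ≠ 0) : ∃ i j, i ≠ j ∧ ∀ U ∈ 𝒯, (i ∈ U ↔ j ∈ U) := by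
  classical
  obtain ⟨i, hi⟩ := Function.ne_iff.1 hd0
  -- the atom of `i` is `W \ W'`: the smallest member of `𝒯` containing `i` minus the largest
  -- member avoiding it
  set W := (univ.filter fun U => U ∈ 𝒯 ∧ i ∈ U).inf id
  set W' := (univ.filter fun U => U ∈ 𝒯 ∧ i ∉ U).sup id
  have hW : W ∈ 𝒯 := inf_induction (p := (· ∈ 𝒯)) (by simpa using htop)
    (fun _ h₁ _ h₂ => h𝒯.infClosed h₁ h₂) fun U hU => (mem_filter.1 hU).2.1
  have hW' : W' ∈ 𝒯 := sup_induction (p := (· ∈ 𝒯)) (by simpa using hbot)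
    (fun _ h₁ _ h₂ => h𝒯.supClosed h₁ h₂) fun U hU => (mem_filter.1 hU).2.1
  have hiW : i ∈ W := inf_induction (p := (i ∈ ·)) (by simp)
    (fun _ h₁ _ h₂ => mem_inter.2 ⟨h₁, h₂⟩) fun U hU => (mem_filter.1 hU).2.2
  have hiW' : i ∉ W' := sup_induction (p := (i ∉ ·)) (by simp)
    (fun _ h₁ _ h₂ => by simp [h₁, h₂]) fun U hU => (mem_filter.1 hU).2.2
  have hsep : ∀ j ∈ W \ W', ∀ U ∈ 𝒯, (i ∈ U ↔ j ∈ U) := fun j hj U hU => by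
    refine ⟨fun hiU => ?_, fun hjU => by_contra fun hiU => ?_⟩
    · exact (inf_le (f := id) (mem_filter.2 ⟨mem_univ U, hU, hiU⟩) : W ⊆ U) (mem_sdiff.1 hj).1
    · exact (mem_sdiff.1 hj).2
        ((le_sup (f := id) (mem_filter.2 ⟨mem_univ U, hU, hiU⟩) : U ⊆ W') hjU)
  have hsum : ∑ k ∈ W \ W', d k = 0 := by
    have hWW' : ∑ k ∈ W ∩ W', d k = 0 := hd _ (h𝒯.infClosed hW hW')
    linarith [sum_inter_add_sum_sdiff W W' d, hd W hW]
  obtain ⟨j, hj, hji⟩ : ∃ j ∈ W \ W', j ≠ i := by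
    by_contra! h
    rw [sum_eq_single_of_mem i (mem_sdiff.2 ⟨hiW, hiW'⟩) fun j hj hji => (hji (h j hj)).elim]
      at hsum
    exact hi hsum
  exact ⟨i, j, hji.symm, hsep j hj⟩

end SetFunctions

section Coordinates

variable {ι : Type*}

def coordSum (U : Finset ι) : StrongDual ℝ (ι → ℝ) := ∑ i ∈ U, ContinuousLinearMap.proj i

@[simp]
theorem coordSum_apply (U : Finset ι) (x : ι → ℝ) : coordSum U x = ∑ i ∈ U, x i := by
  simp [coordSum]

variable [DecidableEq ι]

def EdgesParallelToRoots (P : Set (ι → ℝ)) : Prop :=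
  ∀ x y : ι → ℝ, x ≠ y → IsExtreme ℝ P (segment ℝ x y) →
    ∃ (i j : ι) (c : ℝ), y - x = c • (Pi.single j (1 : ℝ) - Pi.single i (1 : ℝ))

theorem coordSum_nonneg_of_pos_of_subset_or_subset {S S' : Finset ι} {i j : ι} {c : ℝ}
    (h : S ⊆ S' ∨ S' ⊆ S) (hS : 0 < coordSum S (c • (Pi.single j 1 - Pi.single i 1))) :
    0 ≤ coordSum S' (c • (Pi.single j 1 - Pi.single i 1)) := by
  simp only [coordSum_apply, Pi.smul_apply, Pi.sub_apply, smul_eq_mul, ← mul_sum, sum_sub_distrib,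
    sum_pi_single'] at hS ⊢
  rcases h with h | h <;> by_cases hi : i ∈ S <;> by_cases hj : j ∈ S <;>
    by_cases hi' : i ∈ S' <;> by_cases hj' : j ∈ S' <;> simp_all <;> grind

end Coordinates

section BasePolytope

variable {ι : Type*} [Fintype ι]

def basePolytope (f : Finset ι → ℝ) : Set (ι → ℝ) :=
  {x | (∀ U : Finset ι, ∑ i ∈ U, x i ≤ f U) ∧ ∑ i, x i = f univ}

theorem eventually_add_smul_mem_basePolytope {f : Finset ι → ℝ} {m v : ι → ℝ}
    (hm : m ∈ basePolytope f) (hv : ∀ U, ∑ i ∈ U, m i = f U → ∑ i ∈ U, v i = 0) :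
    ∀ᶠ t in 𝓝 (0 : ℝ), m + t • v ∈ basePolytope f := by
  have hU : ∀ U, ∀ᶠ t in 𝓝 (0 : ℝ), ∑ i ∈ U, m i + t * ∑ i ∈ U, v i ≤ f U := by
    intro U
    by_cases htight : ∑ i ∈ U, m i = f U
    · exact Eventually.of_forall fun t => by simp [htight, hv U htight]
    · refine (ContinuousAt.eventually_lt (by fun_prop) continuousAt_const ?_).mono
        fun t ht => ht.le
      simpa using lt_of_le_of_ne (hm.1 U) htight
  filter_upwards [eventually_all.2 hU] with t ht
  refine ⟨fun U => ?_, ?_⟩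
  · simpa [sum_add_distrib, ← mul_sum] using ht U
  · simp [sum_add_distrib, ← mul_sum, hv univ hm.2, hm.2]

variable [DecidableEq ι]

def IsSubmodular (f : Finset ι → ℝ) : Prop :=
  ∀ T U : Finset ι, f (T ∩ U) + f (T ∪ U) ≤ f T + f U

theorem isSublattice_setOf_sum_eq {f : Finset ι → ℝ} (hf : IsSubmodular f) {m : ι → ℝ}
    (hm : m ∈ basePolytope f) : IsSublattice {U : Finset ι | ∑ i ∈ U, m i = f U} := by
  have key : ∀ T U : Finset ι, ∑ i ∈ T, m i = f T → ∑ i ∈ U, m i = f U →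
      ∑ i ∈ T ∩ U, m i = f (T ∩ U) ∧ ∑ i ∈ T ∪ U, m i = f (T ∪ U) := fun T U hT hU => by
    have := sum_union_inter (s₁ := T) (s₂ := U) (f := m)
    have := hm.1 (T ∩ U)
    have := hm.1 (T ∪ U)
    have := hf T U
    constructor <;> linarith
  exact ⟨fun T hT U hU => (key T U hT hU).2, fun T hT U hU => (key T U hT hU).1⟩

theorem edgesParallelToRoots_basePolytope {f : Finset ι → ℝ} (hf : IsSubmodular f) :
    EdgesParallelToRoots (basePolytope f) := by
  intro x y hxy hext
  set m := midpoint ℝ x y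
  have hm : m ∈ basePolytope f := hext.1 (midpoint_mem_segment x y)
  have hx := hext.1 (left_mem_segment ℝ x y)
  have hy := hext.1 (right_mem_segment ℝ x y)
  -- a constraint tight at the midpoint is tight along the whole edge
  have hdir : ∀ U, ∑ i ∈ U, m i = f U → ∑ i ∈ U, (y - x) i = 0 := fun U hU => by
    have hmU : ∑ i ∈ U, m i = (∑ i ∈ U, x i + ∑ i ∈ U, y i) / 2 := by
      simp [m, midpoint_eq_smul_add, sum_add_distrib, ← mul_sum]; ring
    simp only [Pi.sub_apply, sum_sub_distrib]
    linarith [hx.1 U, hy.1 U]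
  set 𝒯 := insert ∅ {U : Finset ι | ∑ i ∈ U, m i = f U}
  have h𝒯 : IsSublattice 𝒯 :=
    ⟨(isSublattice_setOf_sum_eq hf hm).supClosed.insert_lowerBounds fun U _ => empty_subset U,
      (isSublattice_setOf_sum_eq hf hm).infClosed.insert_lowerBounds fun U _ => empty_subset U⟩
  obtain ⟨i, j, hij, hsep⟩ := exists_ne_forall_mem_iff_of_isSublattice h𝒯 (Set.mem_insert _ _)
    (Set.mem_insert_of_mem _ hm.2) (d := y - x)
    (by rintro U (rfl | hU); exacts [sum_empty, hdir U hU]) (sub_ne_zero.2 hxy.symm)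
  set v : ι → ℝ := Pi.single i 1 - Pi.single j 1
  have hv : ∀ U, ∑ k ∈ U, m k = f U → ∑ k ∈ U, v k = 0 := fun U hU => by
    have := hsep U (Set.mem_insert_of_mem _ hU)
    by_cases hiU : i ∈ U <;> simp_all [v, sum_sub_distrib, sum_pi_single']
  obtain ⟨t, ⟨h₁, h₂⟩, ht⟩ : ∃ t : ℝ,
      (m + t • v ∈ basePolytope f ∧ m + -t • v ∈ basePolytope f) ∧ t ≠ 0 := by
    have h := eventually_add_smul_mem_basePolytope hm hv
    have h' := (continuous_neg.tendsto' (0 : ℝ) 0 neg_zero).eventually h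
    exact ((h.and h').filter_mono (nhdsWithin_le_nhds (s := {0}ᶜ))).and self_mem_nhdsWithin
      |>.exists
  rw [neg_smul, ← sub_eq_add_neg] at h₂
  obtain ⟨r, hr⟩ := hext.exists_eq_smul_sub_s9 (midpoint_mem_segment x y) h₁ h₂
  have hr0 : r ≠ 0 := by
    rintro rfl
    have := congrFun hr i
    simp [v, hij, ht] at this
  refine ⟨j, i, t / r, ?_⟩
  rw [div_eq_inv_mul, mul_smul, show Pi.single i 1 - Pi.single j 1 = v from rfl, hr,
    inv_smul_smul₀ hr0]

end BasePolytope

section Forward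

variable {ι : Type*} [Fintype ι] [DecidableEq ι] {s : Finset (ι → ℝ)}

theorem exists_isMaxOn_coordSum_of_isChain (hs : s.Nonempty)
    (hP : EdgesParallelToRoots (convexHull ℝ (s : Set (ι → ℝ)))) {𝒞 : Finset (Finset ι)}
    (h𝒞 : IsChain (· ⊆ ·) (𝒞 : Set (Finset ι))) :
    ∃ x ∈ convexHull ℝ (s : Set (ι → ℝ)),
      ∀ S ∈ 𝒞, IsMaxOn (coordSum S) (convexHull ℝ (s : Set (ι → ℝ))) x := by
  obtain ⟨x, hx, hmax⟩ := (s.finite_toSet.isCompact_convexHull ℝ).exists_mem_extremePoints_isMaxOn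
    (convexHull_nonempty_iff.2 (coe_nonempty.2 hs)) (∑ S ∈ 𝒞, coordSum S)
  refine ⟨x, hx.1, fun S₀ hS₀ => isMaxOn_of_forall_isExtreme_segment hx fun y hyx hext => ?_⟩
  by_contra! hlt
  obtain ⟨i, j, c, hd⟩ := hP x y hyx.symm hext
  have hpos : 0 < coordSum S₀ (y - x) := by rw [map_sub]; linarith
  -- along a root direction, no member of the chain can decrease while `S₀` increases
  have hnonneg : ∀ S ∈ 𝒞, 0 ≤ coordSum S (y - x) := fun S hS => by
    rw [hd] at hpos ⊢
    exact coordSum_nonneg_of_pos_of_subset_or_subset (h𝒞.total hS₀ hS) hpos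
  have hsum : 0 < (∑ S ∈ 𝒞, coordSum S) (y - x) := by
    rw [_root_.sum_apply]
    exact hpos.trans_le (single_le_sum hnonneg hS₀)
  rw [map_sub, sub_pos] at hsum
  exact hsum.not_ge (hmax (hext.1 (right_mem_segment ℝ x y)))

theorem isSubmodular_sup'_coordSum (hs : s.Nonempty)
    (hP : EdgesParallelToRoots (convexHull ℝ (s : Set (ι → ℝ)))) :
    IsSubmodular fun U => s.sup' hs (coordSum U) := by
  intro T U
  have h𝒞 : IsChain (· ⊆ ·) (({T ∩ U, T ∪ U} : Finset (Finset ι)) : Set (Finset ι)) := by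
    rw [coe_pair]; exact IsChain.pair (inter_subset_left.trans subset_union_left)
  obtain ⟨x, hx, hmax⟩ := exists_isMaxOn_coordSum_of_isChain hs hP h𝒞
  beta_reduce
  rw [sup'_eq_of_isMaxOn hs hx (hmax _ (by simp)), sup'_eq_of_isMaxOn hs hx (hmax _ (by simp))]
  have := le_sup'_of_mem_convexHull hs (coordSum T) hx
  have := le_sup'_of_mem_convexHull hs (coordSum U) hx
  simp only [coordSum_apply] at *
  linarith [sum_union_inter (s₁ := T) (s₂ := U) (f := x)]

theorem coordSum_univ_eq_sup' (hs : s.Nonempty)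
    (hP : EdgesParallelToRoots (convexHull ℝ (s : Set (ι → ℝ)))) {p : ι → ℝ}
    (hp : p ∈ convexHull ℝ (s : Set (ι → ℝ))) :
    coordSum univ p = s.sup' hs (coordSum univ) := by
  obtain ⟨q, hq, hq'⟩ := exists_mem_eq_sup' hs (coordSum univ)
  rw [hq']
  refine eq_of_forall_isExtreme_segment hs (fun x y hxy hext => ?_) hp (subset_convexHull ℝ _ hq)
  obtain ⟨i, j, c, hd⟩ := hP x y hxy hext
  have : coordSum univ (y - x) = 0 := by rw [hd]; simp [sum_sub_distrib]
  rw [map_sub] at this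
  linarith

theorem basePolytope_sup'_coordSum_subset (hs : s.Nonempty)
    (hP : EdgesParallelToRoots (convexHull ℝ (s : Set (ι → ℝ)))) :
    basePolytope (fun U => s.sup' hs (coordSum U)) ⊆ convexHull ℝ (s : Set (ι → ℝ)) := by
  classical
  intro p hp
  by_contra hnot
  obtain ⟨φ, u, hφ, hu⟩ := geometric_hahn_banach_closed_point (convex_convexHull ℝ _)
    (s.finite_toSet.isClosed_convexHull ℝ) hnot
  set w : ι → ℝ := fun i => φ fun j => if i = j then 1 else 0
  have hφw : ∀ q, φ q = ∑ i, w i * q i := fun q => by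
    simp_rw [mul_comm (w _)]; exact φ.toLinearMap.pi_apply_eq_sum_univ q
  set 𝒞 := (univ : Finset (Finset ι)).filter fun S => ∃ t, S = univ.filter (t ≤ w ·)
  have h𝒞 : IsChain (· ⊆ ·) (𝒞 : Set (Finset ι)) := by
    rintro _ hS _ hS' -
    obtain ⟨t, rfl⟩ := (mem_filter.1 hS).2
    obtain ⟨t', rfl⟩ := (mem_filter.1 hS').2
    rcases le_total t t' with h | h
    · exact Or.inr (monotone_filter_right _ fun i _ hi => h.trans hi)
    · exact Or.inl (monotone_filter_right _ fun i _ hi => h.trans hi)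
  obtain ⟨x, hx, hmax⟩ := exists_isMaxOn_coordSum_of_isChain hs hP h𝒞
  -- `x` attains every constraint at an upper level set of `w`, so `φ p ≤ φ x` by the layer cake
  have hle : 0 ≤ ∑ i, w i * (x - p) i := by
    refine sum_mul_nonneg_of_sum_filter_le_nonneg w (x - p) (fun t => ?_) ?_
    · have hS : univ.filter (t ≤ w ·) ∈ 𝒞 := mem_filter.2 ⟨mem_univ _, t, rfl⟩
      have := hp.1 (univ.filter (t ≤ w ·))
      beta_reduce at this
      rw [← coordSum_apply, sup'_eq_of_isMaxOn hs hx (hmax _ hS)] at this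
      simpa [sum_sub_distrib] using this
    · have := coordSum_univ_eq_sup' hs hP hx
      simp only [coordSum_apply] at this
      simp [sum_sub_distrib, this, hp.2]
  simp only [Pi.sub_apply, mul_sub, sum_sub_distrib, ← hφw] at hle
  linarith [hφ x hx]

theorem convexHull_eq_basePolytope (hs : s.Nonempty)
    (hP : EdgesParallelToRoots (convexHull ℝ (s : Set (ι → ℝ)))) :
    convexHull ℝ (s : Set (ι → ℝ)) = basePolytope fun U => s.sup' hs (coordSum U) := by
  refine Subset.antisymm (fun p hp => ⟨fun U => ?_, ?_⟩)
    (basePolytope_sup'_coordSum_subset hs hP)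
  · simpa using le_sup'_of_mem_convexHull hs (coordSum U) hp
  · simpa using coordSum_univ_eq_sup' hs hP hp

end Forward

/-- characterization of polymatroid base polytopes / generalized
permutohedra.  For a polytope `P ⊆ ℝⁿ` (the convex hull of a finite nonempty point
set), the following are equivalent: (1) every edge of `P` (a segment `conv{x,y}`,
`x ≠ y`, that is an extreme subset of `P`) is parallel to `e_j - e_i` for some
`i, j ∈ [n]`; (2) there is a submodular function `f : 2^[n] → ℝ` with
`P = {x : ∑_{i∈U} xᵢ ≤ f(U) for all U ⊆ [n], ∑ᵢ xᵢ = f([n])}`. -/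
theorem edges_parallel_iff_polymatroid (n : ℕ) (P : Set (Fin n → ℝ))
    (hP : ∃ s : Finset (Fin n → ℝ), s.Nonempty ∧ P = convexHull ℝ (s : Set (Fin n → ℝ))) :
    ((∀ x y : Fin n → ℝ, x ≠ y → IsExtreme ℝ P (segment ℝ x y) →
        ∃ (i j : Fin n) (c : ℝ), y - x = c • (Pi.single j (1 : ℝ) - Pi.single i (1 : ℝ)))
      ↔
      (∃ f : Finset (Fin n) → ℝ,
        (∀ T U : Finset (Fin n), f (T ∩ U) + f (T ∪ U) ≤ f T + f U) ∧
        P = {x : Fin n → ℝ | (∀ U : Finset (Fin n), ∑ i ∈ U, x i ≤ f U) ∧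
          ∑ i, x i = f Finset.univ})) := by
  obtain ⟨s, hs, rfl⟩ := hP
  constructor
  · intro hedges
    exact ⟨fun U => s.sup' hs (coordSum U), isSubmodular_sup'_coordSum hs hedges,
      convexHull_eq_basePolytope hs hedges⟩
  · rintro ⟨f, hf, hPf⟩
    rw [hPf]
    exact edgesParallelToRoots_basePolytope hf

end PaperPolymatroid
end

section
/- Let H = ([n], 𝓔) be a hypergraph and let P_H be its hypergraphic polytope. Then the map sending an acyclic orientation h of H to the vector (|{e ∈ 𝓔 : h(e) = v}|)_{v∈[n]} ∈ ℝⁿ is a bijection from the set of acyclic orientations of H onto the set of vertices of P_H; moreover, two vertices x, y of P_H corresponding to acyclic orientations h₁, h₂ are adjacent on the skeleton of P_H if and only if there exists a pair {u, v} of distinct vertices of H such that h₁ and h₂ can be obtained from each other by flipping {u, v}. -/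
/-!
A hypergraph on vertex type `V` is given by a finite collection `𝓔` of nonempty
hyperedges (finsets of `V`).  An orientation assigns to each hyperedge a head
belonging to it.  `Arc 𝓔 h u v` is the arc relation of the digraph `D_h`, and an
orientation is acyclic if `D_h` has no directed cycle.  `flip 𝓔 h u v` is the
orientation `h^{(u,v)}`, and `(u, v)` is flippable in `h` if `h^{(u,v)}` is acyclic.
-/

namespace PaperFlip

variable {V : Type*} [DecidableEq V]

/-- The submodular function `f_H(U) = |{e ∈ 𝓔 : U ∩ e ≠ ∅}|` of a hypergraph on `[n]`. -/
def fH (n : ℕ) (𝓔 : Finset (Finset (Fin n))) (U : Finset (Fin n)) : ℝ :=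
  ((𝓔.filter fun e => (U ∩ e).Nonempty).card : ℝ)

/-- The hypergraphic polytope `P_H ⊆ ℝⁿ` of a hypergraph `H = ([n], 𝓔)`. -/
def hypergraphicPolytope (n : ℕ) (𝓔 : Finset (Finset (Fin n))) : Set (Fin n → ℝ) :=
  {x : Fin n → ℝ | (∀ U : Finset (Fin n), ∑ i ∈ U, x i ≤ fH n 𝓔 U) ∧
    ∑ i, x i = fH n 𝓔 Finset.univ}

/-- The map sending an orientation `h` to the vector whose `v`-entry is the number of
hyperedges with head `v`. -/
def headCountVector (n : ℕ) (𝓔 : Finset (Finset (Fin n))) (h : Edge 𝓔 → Fin n) :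
    Fin n → ℝ :=
  fun v => ((Finset.univ.filter fun e : Edge 𝓔 => h e = v).card : ℝ)

end PaperFlip

/-
Call `h` maximal for `c : Fin n → ℝ` if every head maximizes `c` on its hyperedge. Then `x_h`
is tight on every superlevel set of `c`, so summation by parts over these sets shows that `x_h`
maximizes `c ⬝ᵥ ·` on `P_H`; perturbing `c` by `± e_w` then pins down the coordinate `w` of
every other maximizer, as long as `c` does not tie `w` with a vertex sharing a hyperedge.

A rank function of `D_h` for acyclic `h` thus exposes the vertex `x_h`, and Hahn–Banach with a
lexicographic tie-break (whose maximal orientations are acyclic) shows that `P_H` is the convex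
hull of these points. For a flip `h' = h^{(u,v)}`, contracting `v` into `u` in `D_h` leaves an
acyclic digraph, since a cycle through the contracted vertex lifts to one of `D_h` or of
`D_{h'}`; its rank function is maximal for both `h` and `h'` with the single tie `u ~ v`, and
exposes the segment `[x_h, x_{h'}]`. Conversely, on an edge `[x₁, x₂]`, changing one head from
`h₁ e` to `h₂ e` stays on the edge, so all changed heads move from one `u` to one `v`; and a
hyperedge containing `u` and `v` with head `u` in both would push `x₂` beyond the edge.
-/

namespace PaperFlip

open Finset Relation

section Superlevel

variable {ι : Type*} [Fintype ι]

theorem dotProduct_nonneg_of_sum_superlevel_nonneg (c d : ι → ℝ) (hd : ∑ i, d i = 0)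
    (hc : ∀ θ, 0 ≤ ∑ i with θ ≤ c i, d i) : 0 ≤ c ⬝ᵥ d := by
  classical
  suffices ∀ (Θ : Finset ℝ) (c : ι → ℝ), (∀ i, c i ∈ Θ) →
      (∀ θ, 0 ≤ ∑ i with θ ≤ c i, d i) → 0 ≤ c ⬝ᵥ d from
    this (univ.image c) c (fun i => mem_image_of_mem c (mem_univ i)) hc
  intro Θ
  induction Θ using Finset.induction_on_max with
  | empty =>
    intro c hc _
    have : IsEmpty ι := ⟨fun i => by simpa using hc i⟩
    simp [dotProduct]
  | insert a Θ hlt ih =>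
    intro c hc hsup
    rcases Θ.eq_empty_or_nonempty with rfl | hΘ
    · have hca : ∀ i, c i = a := fun i => by simpa using hc i
      simp [dotProduct, hca, ← mul_sum, hd]
    -- lowering the top value `a` of `c` to the next value `b` changes `c ⬝ᵥ d` by
    -- `a - b` times the sum of `d` over the superlevel set at `a`
    set b := Θ.max' hΘ
    have hba : b < a := hlt b (max'_mem Θ hΘ)
    have hsplit : c ⬝ᵥ d
        = (fun i => min (c i) b) ⬝ᵥ d + (a - b) * ∑ i with a ≤ c i, d i := by
      rw [sum_filter, mul_sum, dotProduct, dotProduct, ← sum_add_distrib]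
      refine sum_congr rfl fun i _ => ?_
      rcases mem_insert.mp (hc i) with h | h
      · simp [h, hba.le]
        ring
      · have hb : c i ≤ b := le_max' Θ _ h
        simp [hb, not_le.mpr (hb.trans_lt hba)]
    have hmin : 0 ≤ (fun i => min (c i) b) ⬝ᵥ d := by
      refine ih _ (fun i => ?_) (fun θ => ?_)
      · rcases mem_insert.mp (hc i) with h | h
        · simpa [h, hba.le] using max'_mem Θ hΘ
        · have hb : c i ≤ b := le_max' Θ _ h
          rwa [min_eq_left hb]
      · by_cases hθ : θ ≤ b
        · simpa [le_min_iff, hθ] using hsup θ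
        · simp [hθ]
    rw [hsplit]
    exact add_nonneg hmin (mul_nonneg (sub_nonneg.mpr hba.le) (hsup a))

end Superlevel

section Relation

variable {α : Type*} {r : α → α → Prop}

theorem exists_rank_of_acyclic [Fintype α] (hr : ∀ a, ¬ TransGen r a a) :
    ∃ φ : α → ℕ, ∀ a b, r a b → φ a < φ b := by
  classical
  refine ⟨fun a => #{z | TransGen r z a}, fun a b hab => card_lt_card ?_⟩
  refine (ssubset_iff_of_subset fun z hz => ?_).mpr ⟨a, ?_, ?_⟩
  · simp only [mem_filter, mem_univ, true_and] at hz ⊢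
    exact hz.tail hab
  · simpa using TransGen.single hab
  · simpa using hr a

theorem transGen_avoid_of_not_transGen_self {u p : α} (hu : ¬ TransGen r u u)
    (hp : TransGen r p p) : TransGen (fun x y => r x y ∧ x ≠ u ∧ y ≠ u) p p := by
  have hne : ∀ x, TransGen r p x → ReflTransGen r x p → x ≠ u := by
    rintro x hpx hxp rfl
    exact hu (TransGen.trans_right hxp hpx)
  suffices ∀ x, TransGen r p x → ReflTransGen r x p →
      TransGen (fun x y => r x y ∧ x ≠ u ∧ y ≠ u) p x from this p hp .refl
  intro x hpx hxp
  induction hpx with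
  | single hpx' =>
    exact .single ⟨hpx', hne p hp .refl, hne _ (.single hpx') hxp⟩
  | tail hpb hbc ih =>
    have hbp := ReflTransGen.head hbc hxp
    exact (ih hbp).tail ⟨hbc, hne _ hpb hbp, hne _ (hpb.tail hbc) hxp⟩

end Relation

section Vectors

variable {ι : Type*}

theorem single_sub_single_pos_iff [DecidableEq ι] {a b w : ι} (hab : a ≠ b) :
    0 < (Pi.single b 1 - Pi.single a 1 : ι → ℝ) w ↔ w = b := by
  by_cases hwb : w = b
  · subst hwb; simp [hab]
  · by_cases hwa : w = a
    · subst hwa; simp [hab]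
    · simp [hwa, hwb]

theorem single_sub_single_neg_iff [DecidableEq ι] {a b w : ι} (hab : a ≠ b) :
    (Pi.single b 1 - Pi.single a 1 : ι → ℝ) w < 0 ↔ w = a := by
  by_cases hwa : w = a
  · subst hwa; simp [Ne.symm hab]
  · by_cases hwb : w = b
    · subst hwb; simp [hwa]
    · simp [hwa, hwb]

theorem mem_segment_of_eq_off_pair [Fintype ι] {x y p : ι → ℝ} {u v : ι} (huv : u ≠ v)
    (hy : ∀ w, w ≠ u → w ≠ v → y w = x w) (hp : ∀ w, w ≠ u → w ≠ v → p w = x w)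
    (hsy : ∑ w, y w = ∑ w, x w) (hsp : ∑ w, p w = ∑ w, x w) (hpu : p u ≤ x u)
    (hpv : p v ≤ y v) : p ∈ segment ℝ x y := by
  have hpair : ∀ z : ι → ℝ, (∀ w, w ≠ u → w ≠ v → z w = x w) → ∑ w, z w = ∑ w, x w →
      z u + z v = x u + x v := fun z hz hs => by
    have := Fintype.sum_eq_add u v huv (f := z - x) fun w hw => by simp [hz w hw.1 hw.2]
    simp only [Pi.sub_apply, sum_sub_distrib, hs, sub_self] at this
    linarith
  have hyuv := hpair y hy hsy
  have hpuv := hpair p hp hsp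
  rcases (show y u ≤ x u by linarith).eq_or_lt with heq | hlt
  · have : p = x := funext fun w => by
      by_cases hwu : w = u
      · subst hwu; linarith
      by_cases hwv : w = v
      · subst hwv; linarith
      exact hp w hwu hwv
    exact this ▸ left_mem_segment ℝ x y
  · set t := (x u - p u) / (x u - y u)
    have ht : t * (x u - y u) = x u - p u := div_mul_cancel₀ _ (sub_ne_zero.mpr hlt.ne')
    refine ⟨1 - t, t, ?_, div_nonneg (by linarith) (by linarith), by ring, funext fun w => ?_⟩
    · rw [sub_nonneg, div_le_one (by linarith)]
      linarith
    simp only [Pi.add_apply, Pi.smul_apply, smul_eq_mul]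
    by_cases hwu : w = u
    · subst hwu; linear_combination -ht
    by_cases hwv : w = v
    · subst hwv; linear_combination t * hyuv + ht - hpuv
    rw [hy w hwu hwv, hp w hwu hwv]
    ring

theorem notMem_extremePoints_of_add_smul_sub {E : Type*} [AddCommGroup E] [Module ℝ E]
    {A : Set E} {x y : E} {t : ℝ} (ht : 0 < t) (hxy : x ≠ y) (hx : x ∈ A)
    (hy : y + t • (y - x) ∈ A) : y ∉ A.extremePoints ℝ := by
  intro hext
  refine hxy ((mem_extremePoints.mp hext).2 x hx _ hy
    ⟨t / (1 + t), 1 / (1 + t), by positivity, by positivity,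
      by rw [← add_div, add_comm, div_self (by positivity)], ?_⟩).1
  match_scalars
  · ring
  · field_simp

def exposedFace [Fintype ι] (A : Set (ι → ℝ)) (c : ι → ℝ) : Set (ι → ℝ) :=
  {p ∈ A | ∀ y ∈ A, c ⬝ᵥ y ≤ c ⬝ᵥ p}

theorem isExposed_exposedFace [Fintype ι] (A : Set (ι → ℝ)) (c : ι → ℝ) :
    IsExposed ℝ A (exposedFace A c) := by
  classical
  exact fun _ => ⟨LinearMap.toContinuousLinearMap (dotProductEquiv ℝ ι c), by
    simp [exposedFace]⟩

end Vectors

section Orientation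

variable {V W : Type*} {𝓔 : Finset (Finset V)} {h : Edge 𝓔 → V}

def HeadsMaximize (c : V → ℝ) (h : Edge 𝓔 → V) : Prop :=
  ∀ e : Edge 𝓔, ∀ w ∈ e.1, c w ≤ c (h e)

def ContractedArc (𝓔 : Finset (Finset V)) (h : Edge 𝓔 → V) (q : V → W) (a b : W) : Prop :=
  Relation.Map (Arc 𝓔 h) q q a b ∧ a ≠ b

theorem IsOrientation.update [DecidableEq V] (hh : IsOrientation 𝓔 h) {e : Edge 𝓔} {a : V}
    (ha : a ∈ e.1) : IsOrientation 𝓔 (Function.update h e a) := by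
  intro e'
  by_cases he : e' = e
  · subst he; simpa using ha
  · simpa [he] using hh e'

theorem isAcyclic_of_lt {β : Type*} [Preorder β] (hh : IsOrientation 𝓔 h) (k : V → β)
    (hk : ∀ a b, Arc 𝓔 h a b → k a < k b) : IsAcyclic 𝓔 h := by
  refine ⟨hh, fun v hv => lt_irrefl (k v) ?_⟩
  have := TransGen.lift k hk v v hv
  rwa [transGen_eq_self] at this

theorem exists_isAcyclic_headsMaximize [LinearOrder V] (hE : ∀ e ∈ 𝓔, e.Nonempty)
    (c : V → ℝ) : ∃ h : Edge 𝓔 → V, IsAcyclic 𝓔 h ∧ HeadsMaximize c h := by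
  -- ties of `c` are broken by the order of `V`
  let k : V → ℝ ×ₗ V := fun w => toLex (c w, w)
  choose h hmem hmax using fun e : Edge 𝓔 => e.1.exists_max_image k (hE e.1 e.2)
  refine ⟨h, isAcyclic_of_lt hmem k ?_, fun e w hw => ?_⟩
  · rintro a b ⟨e, rfl, ha, hne⟩
    exact (hmax e a ha).lt_of_ne fun hk => hne (congrArg (fun p => (ofLex p).2) hk)
  · rcases Prod.Lex.toLex_le_toLex.mp (hmax e w hw) with hlt | ⟨heq, -⟩
    · exact hlt.le
    · exact heq.le

theorem exists_headsMaximize_of_contractedArc [Fintype W] (q : V → W)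
    (hq : ∀ a, ¬ TransGen (ContractedArc 𝓔 h q) a a) :
    ∃ φ : W → ℝ, HeadsMaximize (fun w => φ (q w)) h ∧
      ∀ e : Edge 𝓔, ∀ w ∈ e.1, q w ≠ q (h e) → φ (q w) + 1 ≤ φ (q (h e)) := by
  obtain ⟨φ, hφ⟩ := exists_rank_of_acyclic hq
  have hlt : ∀ e : Edge 𝓔, ∀ w ∈ e.1, q w ≠ q (h e) → (φ (q w) : ℝ) + 1 ≤ φ (q (h e)) :=
    fun e w hw hne => by
      exact_mod_cast hφ _ _ ⟨⟨w, h e, ⟨e, rfl, hw, fun hwe => hne (hwe ▸ rfl)⟩, rfl, rfl⟩, hne⟩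
  refine ⟨fun a => φ a, fun e w hw => ?_, hlt⟩
  by_cases hne : q w = q (h e)
  · simp [hne]
  · linarith [hlt e w hw hne]

theorem IsAcyclic.exists_headsMaximize [Fintype V] (hh : IsAcyclic 𝓔 h) :
    ∃ c : V → ℝ, HeadsMaximize c h ∧
      ∀ e : Edge 𝓔, ∀ w ∈ e.1, w ≠ h e → c w + 1 ≤ c (h e) := by
  refine exists_headsMaximize_of_contractedArc id fun a ha => hh.2 a (ha.mono ?_ a a)
  intro x y hxy
  simpa [map_id_id] using hxy.1

theorem HeadsMaximize.add_single [DecidableEq V] {c : V → ℝ} (hc : HeadsMaximize c h) {w : V}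
    (hw : ∀ e : Edge 𝓔, w ∈ e.1 → h e ≠ w → c w + 1 ≤ c (h e)) :
    HeadsMaximize (c + Pi.single w 1) h := by
  intro e z hz
  have hcz := hc e z hz
  rcases eq_or_ne (h e) w with hew | hew
  · rw [hew] at hcz
    simp only [Pi.add_apply, Pi.single_apply, hew, if_true]
    split_ifs <;> linarith
  · rcases eq_or_ne z w with rfl | hzw
    · simpa [hew] using hw e hz hew
    · simpa [hzw, hew] using hcz

theorem HeadsMaximize.sub_single [DecidableEq V] {c : V → ℝ} (hc : HeadsMaximize c h) {w : V}
    (hw : ∀ e : Edge 𝓔, h e = w → ∀ z ∈ e.1, z ≠ w → c z + 1 ≤ c w) :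
    HeadsMaximize (c - Pi.single w 1) h := by
  intro e z hz
  have hcz := hc e z hz
  rcases eq_or_ne (h e) w with hew | hew
  · rcases eq_or_ne z w with rfl | hzw
    · simp [hew]
    · have := hw e hew z hz hzw
      simp [hzw, hew]
      linarith
  · simp only [Pi.sub_apply, Pi.single_apply, hew, if_false]
    split_ifs <;> linarith

end Orientation

section Flip

variable {V : Type*} [DecidableEq V] {𝓔 : Finset (Finset V)} {h : Edge 𝓔 → V} {u v : V}

theorem exists_mem_of_flip_ne (hne : flip 𝓔 h u v ≠ h) :
    ∃ e : Edge 𝓔, u ∈ e.1 ∧ v ∈ e.1 ∧ h e = u := by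
  by_contra! hcon
  exact hne (funext fun e => if_neg fun H => hcon e H.1 H.2.1 H.2.2)

theorem arc_flip_of_ne {w z : V} (harc : Arc 𝓔 h w z) (hz : z ≠ u) :
    Arc 𝓔 (flip 𝓔 h u v) w z := by
  obtain ⟨e, rfl, hwe, hwz⟩ := harc
  exact ⟨e, if_neg fun H => hz H.2.2, hwe, hwz⟩

theorem arc_flip_or {w : V} (harc : Arc 𝓔 h w u) (hw : w ≠ v) :
    Arc 𝓔 (flip 𝓔 h u v) w u ∨ Arc 𝓔 (flip 𝓔 h u v) w v := by
  obtain ⟨e, he, hwe, hwu⟩ := harc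
  by_cases H : u ∈ e.1 ∧ v ∈ e.1 ∧ h e = u
  · exact .inr ⟨e, if_pos H, hwe, hw⟩
  · exact .inl ⟨e, (if_neg H).trans he, hwe, hwu⟩

theorem flip_apply_ne_left (hh : IsOrientation 𝓔 h) (huv : u ≠ v) {e : Edge 𝓔}
    (hv : v ∈ e.1) : flip 𝓔 h u v e ≠ u := by
  unfold flip
  split_ifs with H
  · exact huv.symm
  · exact fun heu => H ⟨heu ▸ hh e, hv, heu⟩

theorem update_id_flip (e : Edge 𝓔) :
    Function.update id v u (flip 𝓔 h u v e) = Function.update id v u (h e) := by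
  unfold flip
  split_ifs with H
  · simp [H.2.2, Function.update_apply]
  · rfl

theorem update_id_eq_self_of_ne {w : V} (hw : Function.update id v u w ≠ u) :
    Function.update id v u w = w := by
  by_cases hwv : w = v
  · simp [hwv] at hw
  · simp [hwv]

theorem update_id_eq_left {w : V} (hw : Function.update id v u w = u) : w = u ∨ w = v := by
  by_cases hwv : w = v
  · exact .inr hwv
  · simp_all

theorem eq_or_of_update_id_eq {a b : V}
    (hab : Function.update id v u a = Function.update id v u b) (hne : a ≠ b) :
    a = u ∧ b = v ∨ a = v ∧ b = u := by
  by_cases ha : Function.update id v u a = u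
  · rcases update_id_eq_left ha with ha' | ha' <;>
      rcases update_id_eq_left (hab ▸ ha) with hb' | hb'
    · exact (hne (ha'.trans hb'.symm)).elim
    · exact .inl ⟨ha', hb'⟩
    · exact .inr ⟨ha', hb'⟩
    · exact (hne (ha'.trans hb'.symm)).elim
  · exact (hne ((update_id_eq_self_of_ne ha).symm.trans
      (hab.trans (update_id_eq_self_of_ne (hab ▸ ha))))).elim

theorem contractedArc_flip_of_ne {a b : V}
    (hR : ContractedArc 𝓔 h (Function.update id v u) a b) (ha : a ≠ u) (hb : b ≠ u) :
    Arc 𝓔 h a b ∧ Arc 𝓔 (flip 𝓔 h u v) a b := by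
  obtain ⟨⟨w, z, harc, rfl, rfl⟩, -⟩ := hR
  rw [update_id_eq_self_of_ne ha, update_id_eq_self_of_ne hb] at *
  exact ⟨harc, arc_flip_of_ne harc hb⟩

theorem contractedArc_flip_of_left {b : V}
    (hR : ContractedArc 𝓔 h (Function.update id v u) u b) :
    ∃ s, (s = u ∨ s = v) ∧ Arc 𝓔 h s b ∧ Arc 𝓔 (flip 𝓔 h u v) s b := by
  obtain ⟨⟨w, z, harc, hw, rfl⟩, hne⟩ := hR
  have hz := update_id_eq_self_of_ne hne.symm
  rw [hz] at hne ⊢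
  exact ⟨w, update_id_eq_left hw, harc, arc_flip_of_ne harc hne.symm⟩

theorem contractedArc_flip_of_right (huv : u ≠ v) (hvu : Arc 𝓔 h v u)
    (huv' : Arc 𝓔 (flip 𝓔 h u v) u v) {a : V}
    (hR : ContractedArc 𝓔 h (Function.update id v u) a u) :
    TransGen (Arc 𝓔 h) a u ∧ TransGen (Arc 𝓔 (flip 𝓔 h u v)) a v := by
  obtain ⟨⟨w, z, harc, rfl, hz⟩, hne⟩ := hR
  have hw := update_id_eq_self_of_ne hne
  have hwv : w ≠ v := fun hwv => huv (by simpa [hwv] using hw)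
  rw [hw]
  rcases update_id_eq_left hz with rfl | rfl
  · exact ⟨.single harc,
      (arc_flip_or harc hwv).elim (fun h' => (TransGen.single h').tail huv') .single⟩
  · exact ⟨(TransGen.single harc).tail hvu, .single (arc_flip_of_ne harc huv.symm)⟩

theorem not_transGen_contractedArc_flip_left (hh : IsAcyclic 𝓔 h)
    (hh' : IsAcyclic 𝓔 (flip 𝓔 h u v)) (huv : u ≠ v) (hvu : Arc 𝓔 h v u)
    (huv' : Arc 𝓔 (flip 𝓔 h u v) u v) :
    ¬ TransGen (ContractedArc 𝓔 h (Function.update id v u)) u u := by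
  suffices ∀ z, TransGen (ContractedArc 𝓔 h (Function.update id v u)) u z → z ≠ u ∧
      ∃ s, (s = u ∨ s = v) ∧ TransGen (Arc 𝓔 h) s z ∧ TransGen (Arc 𝓔 (flip 𝓔 h u v)) s z from
    fun hu => (this u hu).1 rfl
  intro z hz
  induction hz with
  | single hR =>
    obtain ⟨s, hs, h₁, h₂⟩ := contractedArc_flip_of_left hR
    exact ⟨hR.2.symm, s, hs, .single h₁, .single h₂⟩
  | @tail b c _ hR ih =>
    obtain ⟨hb, s, hs, h₁, h₂⟩ := ih
    by_cases hc : c = u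
    · subst hc
      obtain ⟨t₁, t₂⟩ := contractedArc_flip_of_right huv hvu huv' hR
      rcases hs with rfl | rfl
      · exact (hh.2 _ (h₁.trans t₁)).elim
      · exact (hh'.2 _ (h₂.trans t₂)).elim
    · obtain ⟨a₁, a₂⟩ := contractedArc_flip_of_ne hR hb hc
      exact ⟨hc, s, hs, h₁.tail a₁, h₂.tail a₂⟩

theorem contractedArc_flip_acyclic (hh : IsAcyclic 𝓔 h) (hh' : IsAcyclic 𝓔 (flip 𝓔 h u v))
    (huv : u ≠ v) (hvu : Arc 𝓔 h v u) (huv' : Arc 𝓔 (flip 𝓔 h u v) u v) (a : V) :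
    ¬ TransGen (ContractedArc 𝓔 h (Function.update id v u)) a a := by
  intro ha
  by_cases hu : TransGen (ContractedArc 𝓔 h (Function.update id v u)) u u
  · exact not_transGen_contractedArc_flip_left hh hh' huv hvu huv' hu
  · refine hh.2 a ((transGen_avoid_of_not_transGen_self hu ha).mono ?_ a a)
    exact fun x y hxy => (contractedArc_flip_of_ne hxy.1 hxy.2.1 hxy.2.2).1

theorem exists_headsMaximize_flip [Fintype V] (hh : IsAcyclic 𝓔 h)
    (hh' : IsAcyclic 𝓔 (flip 𝓔 h u v)) (hne : flip 𝓔 h u v ≠ h) (huv : u ≠ v) :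
    ∃ c : V → ℝ, HeadsMaximize c h ∧ HeadsMaximize c (flip 𝓔 h u v) ∧
      (∀ e : Edge 𝓔, ∀ w ∈ e.1, w ≠ h e → (w = v → h e ≠ u) → c w + 1 ≤ c (h e)) ∧
      (∀ e : Edge 𝓔, ∀ w ∈ e.1, w ≠ flip 𝓔 h u v e → (w = u → flip 𝓔 h u v e ≠ v) →
        c w + 1 ≤ c (flip 𝓔 h u v e)) := by
  obtain ⟨e₀, hu₀, hv₀, he₀⟩ := exists_mem_of_flip_ne hne
  have hvu : Arc 𝓔 h v u := ⟨e₀, he₀, hv₀, huv.symm⟩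
  have huv' : Arc 𝓔 (flip 𝓔 h u v) u v := ⟨e₀, if_pos ⟨hu₀, hv₀, he₀⟩, hu₀, huv⟩
  obtain ⟨φ, hmax, hlt⟩ := exists_headsMaximize_of_contractedArc _
    (contractedArc_flip_acyclic hh hh' huv hvu huv')
  refine ⟨_, hmax, fun e w hw => by simpa only [update_id_flip] using hmax e w hw,
    fun e w hw hwe hwv => hlt e w hw fun hq => ?_, fun e w hw hwe hwu => ?_⟩
  · rcases eq_or_of_update_id_eq hq hwe with ⟨rfl, hev⟩ | ⟨rfl, heu⟩
    · exact hh.2 _ ((TransGen.single ⟨e, hev, hw, huv⟩).tail hvu)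
    · exact hwv rfl heu
  · simp only [update_id_flip]
    refine hlt e w hw fun hq => ?_
    rw [← update_id_flip] at hq
    rcases eq_or_of_update_id_eq hq hwe with ⟨rfl, hev⟩ | ⟨rfl, heu⟩
    · exact hwu rfl hev
    · exact flip_apply_ne_left hh.1 huv hw heu

end Flip

section HeadCount

variable {n : ℕ} {𝓔 : Finset (Finset (Fin n))} {h : Edge 𝓔 → Fin n} {c p : Fin n → ℝ}

theorem fH_eq_card (U : Finset (Fin n)) :
    fH n 𝓔 U = #{e : Edge 𝓔 | (U ∩ e.1).Nonempty} := by
  rw [fH, card_filter, card_filter, ← sum_coe_sort 𝓔]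

theorem sum_headCountVector (h : Edge 𝓔 → Fin n) (U : Finset (Fin n)) :
    ∑ i ∈ U, headCountVector n 𝓔 h i = #{e : Edge 𝓔 | h e ∈ U} := by
  simp only [headCountVector, natCast_card_filter]
  rw [sum_comm]
  exact sum_congr rfl fun e _ => sum_ite_eq U (h e) fun _ => 1

theorem dotProduct_headCountVector (c : Fin n → ℝ) (h : Edge 𝓔 → Fin n) :
    c ⬝ᵥ headCountVector n 𝓔 h = ∑ e, c (h e) := by
  simp only [dotProduct, headCountVector, natCast_card_filter, mul_sum]
  rw [sum_comm]
  simp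

theorem headCountVector_update (h : Edge 𝓔 → Fin n) (e : Edge 𝓔) (a : Fin n) :
    headCountVector n 𝓔 (Function.update h e a)
      = headCountVector n 𝓔 h + Pi.single a 1 - Pi.single (h e) 1 := by
  ext v
  simp only [headCountVector, natCast_card_filter, Pi.add_apply, Pi.sub_apply, Pi.single_apply]
  rw [← add_sum_erase _ _ (mem_univ e), ← add_sum_erase _ _ (mem_univ e),
    sum_congr rfl fun e' he' => by rw [Function.update_of_ne (ne_of_mem_erase he')]]
  simp only [Function.update_self, @eq_comm _ v]
  split_ifs <;> ring

theorem filter_head_mem_subset (hh : IsOrientation 𝓔 h) (U : Finset (Fin n)) :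
    ({e | h e ∈ U} : Finset (Edge 𝓔)) ⊆ ({e | (U ∩ e.1).Nonempty} : Finset (Edge 𝓔)) := by
  intro e he
  simp only [mem_filter, mem_univ, true_and] at he ⊢
  exact ⟨h e, mem_inter.mpr ⟨he, hh e⟩⟩

theorem sum_headCountVector_le_fH (hh : IsOrientation 𝓔 h) (U : Finset (Fin n)) :
    ∑ i ∈ U, headCountVector n 𝓔 h i ≤ fH n 𝓔 U := by
  rw [sum_headCountVector, fH_eq_card]
  exact_mod_cast card_le_card (filter_head_mem_subset hh U)

theorem sum_headCountVector_eq_fH (hh : IsOrientation 𝓔 h) {U : Finset (Fin n)}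
    (hU : ∀ e : Edge 𝓔, (U ∩ e.1).Nonempty → h e ∈ U) :
    ∑ i ∈ U, headCountVector n 𝓔 h i = fH n 𝓔 U := by
  rw [sum_headCountVector, fH_eq_card]
  congr 2
  exact (filter_head_mem_subset hh U).antisymm fun e he => by simpa using hU e (by simpa using he)

theorem headCountVector_mem (hh : IsOrientation 𝓔 h) :
    headCountVector n 𝓔 h ∈ hypergraphicPolytope n 𝓔 :=
  ⟨sum_headCountVector_le_fH hh, sum_headCountVector_eq_fH hh fun _ _ => mem_univ _⟩

theorem convex_hypergraphicPolytope : Convex ℝ (hypergraphicPolytope n 𝓔) := by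
  intro y hy z hz a b ha hb hab
  have hsum : ∀ U : Finset (Fin n), ∑ i ∈ U, (a • y + b • z) i
      = a * ∑ i ∈ U, y i + b * ∑ i ∈ U, z i := fun U => by
    simp [sum_add_distrib, mul_sum]
  refine ⟨fun U => ?_, ?_⟩
  · rw [hsum]
    calc a * ∑ i ∈ U, y i + b * ∑ i ∈ U, z i ≤ a * fH n 𝓔 U + b * fH n 𝓔 U := by
          gcongr
          exacts [hy.1 U, hz.1 U]
      _ = fH n 𝓔 U := by rw [← add_mul, hab, one_mul]
  · rw [hsum, hy.2, hz.2, ← add_mul, hab, one_mul]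

theorem dotProduct_le_of_headsMaximize (hh : IsOrientation 𝓔 h) (hc : HeadsMaximize c h)
    (hp : p ∈ hypergraphicPolytope n 𝓔) : c ⬝ᵥ p ≤ c ⬝ᵥ headCountVector n 𝓔 h := by
  have key := dotProduct_nonneg_of_sum_superlevel_nonneg c (headCountVector n 𝓔 h - p) ?_
    fun θ => ?_
  · rwa [dotProduct_sub, sub_nonneg] at key
  · simp [sum_sub_distrib, (headCountVector_mem hh).2, hp.2]
  · -- heads of the hyperedges meeting a superlevel set of `c` lie in it
    have htight := sum_headCountVector_eq_fH hh (U := {i | θ ≤ c i}) fun e ⟨w, hw⟩ => by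
      simp only [mem_inter, mem_filter, mem_univ, true_and] at hw ⊢
      exact hw.1.trans (hc e w hw.2)
    simpa [sum_sub_distrib, htight] using hp.1 {i | θ ≤ c i}

theorem headCountVector_mem_exposedFace (hh : IsOrientation 𝓔 h) (hc : HeadsMaximize c h) :
    headCountVector n 𝓔 h ∈ exposedFace (hypergraphicPolytope n 𝓔) c :=
  ⟨headCountVector_mem hh, fun _ hy => dotProduct_le_of_headsMaximize hh hc hy⟩

theorem dotProduct_le_of_mem_exposedFace {d : Fin n → ℝ} (hh : IsOrientation 𝓔 h)
    (hcd : HeadsMaximize (c + d) h) (hp : p ∈ exposedFace (hypergraphicPolytope n 𝓔) c) :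
    d ⬝ᵥ p ≤ d ⬝ᵥ headCountVector n 𝓔 h := by
  have h₁ := dotProduct_le_of_headsMaximize hh hcd hp.1
  have h₂ := hp.2 _ (headCountVector_mem hh)
  rw [add_dotProduct, add_dotProduct] at h₁
  linarith

theorem apply_le_of_mem_exposedFace {w : Fin n} (hh : IsOrientation 𝓔 h)
    (hc : HeadsMaximize c h) (hw : ∀ e : Edge 𝓔, w ∈ e.1 → h e ≠ w → c w + 1 ≤ c (h e))
    (hp : p ∈ exposedFace (hypergraphicPolytope n 𝓔) c) : p w ≤ headCountVector n 𝓔 h w := by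
  simpa using dotProduct_le_of_mem_exposedFace hh (hc.add_single hw) hp

theorem le_apply_of_mem_exposedFace {w : Fin n} (hh : IsOrientation 𝓔 h)
    (hc : HeadsMaximize c h) (hw : ∀ e : Edge 𝓔, h e = w → ∀ z ∈ e.1, z ≠ w → c z + 1 ≤ c w)
    (hp : p ∈ exposedFace (hypergraphicPolytope n 𝓔) c) : headCountVector n 𝓔 h w ≤ p w := by
  have := dotProduct_le_of_mem_exposedFace hh (d := -Pi.single w 1)
    (by simpa [← sub_eq_add_neg] using hc.sub_single hw) hp
  simpa using this

end HeadCount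

section Vertices

variable {n : ℕ} {𝓔 : Finset (Finset (Fin n))} {h : Edge 𝓔 → Fin n}

theorem headCountVector_mem_extremePoints (hh : IsAcyclic 𝓔 h) :
    headCountVector n 𝓔 h ∈ (hypergraphicPolytope n 𝓔).extremePoints ℝ := by
  obtain ⟨c, hc, hlt⟩ := hh.exists_headsMaximize
  have hface : exposedFace (hypergraphicPolytope n 𝓔) c = {headCountVector n 𝓔 h} := by
    refine Set.eq_singleton_iff_unique_mem.mpr ⟨headCountVector_mem_exposedFace hh.1 hc,
      fun p hp => funext fun w => le_antisymm ?_ ?_⟩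
    · exact apply_le_of_mem_exposedFace hh.1 hc (fun e hw hne => hlt e w hw hne.symm) hp
    · exact le_apply_of_mem_exposedFace hh.1 hc
        (fun e hew z hz hzw => hew ▸ hlt e z hz (hew ▸ hzw)) hp
  rw [← isExtreme_singleton, ← hface]
  exact (isExposed_exposedFace _ c).isExtreme

theorem headCountVector_injOn : Set.InjOn (headCountVector n 𝓔) {h | IsAcyclic 𝓔 h} := by
  intro h₁ hh₁ h₂ hh₂ heq
  obtain ⟨c, hc, hlt⟩ := IsAcyclic.exists_headsMaximize hh₁
  by_contra hne
  obtain ⟨e, he⟩ := Function.ne_iff.mp hne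
  have hsum : ∑ e, c (h₂ e) < ∑ e, c (h₁ e) :=
    sum_lt_sum (fun e _ => hc e _ (hh₂.1 e))
      ⟨e, mem_univ e, by linarith [hlt e _ (hh₂.1 e) (Ne.symm he)]⟩
  rw [← dotProduct_headCountVector, ← dotProduct_headCountVector, heq] at hsum
  exact lt_irrefl _ hsum

theorem hypergraphicPolytope_subset_convexHull (hE : ∀ e ∈ 𝓔, e.Nonempty) :
    hypergraphicPolytope n 𝓔 ⊆ convexHull ℝ (headCountVector n 𝓔 '' {h | IsAcyclic 𝓔 h}) := by
  intro p hp
  by_contra hpS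
  have hfin : (headCountVector n 𝓔 '' {h | IsAcyclic 𝓔 h}).Finite := (Set.toFinite _).image _
  obtain ⟨l, u, hlS, hlp⟩ := geometric_hahn_banach_closed_point (convex_convexHull ℝ _)
    (hfin.isCompact_convexHull (𝕜 := ℝ)).isClosed hpS
  let c : Fin n → ℝ := fun i => l fun j => if i = j then 1 else 0
  have hl : ∀ y, l y = c ⬝ᵥ y := fun y => by
    simpa [dotProduct, c, mul_comm] using LinearMap.pi_apply_eq_sum_univ l.toLinearMap y
  obtain ⟨h, hh, hc⟩ := exists_isAcyclic_headsMaximize hE c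
  have hlh := hlS _ (subset_convexHull ℝ _ ⟨h, hh, rfl⟩)
  have hch := dotProduct_le_of_headsMaximize hh.1 hc hp
  rw [hl] at hlh hlp
  linarith

theorem extremePoints_subset_image (hE : ∀ e ∈ 𝓔, e.Nonempty) :
    (hypergraphicPolytope n 𝓔).extremePoints ℝ ⊆
      headCountVector n 𝓔 '' {h | IsAcyclic 𝓔 h} := by
  rw [(hypergraphicPolytope_subset_convexHull hE).antisymm <| convexHull_min
    (by rintro _ ⟨h, hh, rfl⟩; exact headCountVector_mem hh.1) convex_hypergraphicPolytope]
  exact extremePoints_convexHull_subset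

end Vertices

section Edges

variable {n : ℕ} {𝓔 : Finset (Finset (Fin n))} {h h₁ h₂ : Edge 𝓔 → Fin n} {u v : Fin n}

theorem isExtreme_segment_of_flip (hh : IsAcyclic 𝓔 h) (hh' : IsAcyclic 𝓔 (flip 𝓔 h u v))
    (hne : flip 𝓔 h u v ≠ h) (huv : u ≠ v) :
    IsExtreme ℝ (hypergraphicPolytope n 𝓔)
      (segment ℝ (headCountVector n 𝓔 h) (headCountVector n 𝓔 (flip 𝓔 h u v))) := by
  obtain ⟨c, hmax, hmax', hlt, hlt'⟩ := exists_headsMaximize_flip hh hh' hne huv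
  have hx := headCountVector_mem_exposedFace hh.1 hmax
  have hx' := headCountVector_mem_exposedFace hh'.1 hmax'
  have hoff : ∀ p ∈ exposedFace (hypergraphicPolytope n 𝓔) c,
      ∀ w, w ≠ u → w ≠ v → p w = headCountVector n 𝓔 h w := by
    intro p hp w hwu hwv
    refine le_antisymm (apply_le_of_mem_exposedFace hh.1 hmax (fun e hwe hew => ?_) hp)
      (le_apply_of_mem_exposedFace hh.1 hmax (fun e hew z hz hzw => ?_) hp)
    · exact hlt e w hwe (Ne.symm hew) fun hwv' => (hwv hwv').elim
    · subst hew
      exact hlt e z hz hzw fun _ => hwu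
  have hsum : ∀ p ∈ exposedFace (hypergraphicPolytope n 𝓔) c,
      ∑ w, p w = ∑ w, headCountVector n 𝓔 h w :=
    fun p hp => hp.1.2.trans (headCountVector_mem hh.1).2.symm
  have hface : exposedFace (hypergraphicPolytope n 𝓔) c
      = segment ℝ (headCountVector n 𝓔 h) (headCountVector n 𝓔 (flip 𝓔 h u v)) := by
    refine Set.Subset.antisymm (fun p hp => ?_)
      (((isExposed_exposedFace _ _).convex convex_hypergraphicPolytope).segment_subset hx hx')
    exact mem_segment_of_eq_off_pair huv (hoff _ hx') (hoff p hp) (hsum _ hx') (hsum p hp)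
      (apply_le_of_mem_exposedFace hh.1 hmax
        (fun e hue heu => hlt e u hue (Ne.symm heu) fun H => (huv H).elim) hp)
      (apply_le_of_mem_exposedFace hh'.1 hmax'
        (fun e hve hev => hlt' e v hve (Ne.symm hev) fun H => (huv H.symm).elim) hp)
  rw [← hface]
  exact (isExposed_exposedFace _ _).isExtreme

theorem exists_pos_smul_of_isExtreme_segment (hh₁ : IsOrientation 𝓔 h₁)
    (hh₂ : IsOrientation 𝓔 h₂) (hseg : IsExtreme ℝ (hypergraphicPolytope n 𝓔)
      (segment ℝ (headCountVector n 𝓔 h₁) (headCountVector n 𝓔 h₂)))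
    {e : Edge 𝓔} (he : h₁ e ≠ h₂ e) : ∃ t : ℝ, 0 < t ∧
      Pi.single (h₂ e) 1 - Pi.single (h₁ e) 1
        = t • (headCountVector n 𝓔 h₂ - headCountVector n 𝓔 h₁) := by
  have hyP := headCountVector_mem (hh₁.update (hh₂ e))
  have hzP := headCountVector_mem (hh₂.update (hh₁ e))
  rw [headCountVector_update] at hyP hzP
  -- swapping the head of `e` in `h₁` and in `h₂` gives two points with the segment's midpoint
  have hmid : (1 / 2 : ℝ) • headCountVector n 𝓔 h₁ + (1 / 2 : ℝ) • headCountVector n 𝓔 h₂ ∈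
      openSegment ℝ (headCountVector n 𝓔 h₁ + Pi.single (h₂ e) 1 - Pi.single (h₁ e) 1)
        (headCountVector n 𝓔 h₂ + Pi.single (h₁ e) 1 - Pi.single (h₂ e) 1) :=
    ⟨1 / 2, 1 / 2, by norm_num, by norm_num, by norm_num, by module⟩
  have hmem := hseg.2 hyP hzP ⟨1 / 2, 1 / 2, by norm_num, by norm_num, by norm_num, rfl⟩ hmid
  rw [segment_eq_image_lineMap] at hmem
  obtain ⟨t, ⟨ht, -⟩, hxt⟩ := hmem
  rw [AffineMap.lineMap_apply_module', add_comm, add_sub_assoc, add_left_cancel_iff] at hxt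
  refine ⟨t, ht.lt_of_ne fun ht0 => ?_, hxt.symm⟩
  have := congrFun hxt (h₂ e)
  simp [← ht0, he] at this

theorem exists_flip_of_isExtreme_segment (hh₁ : IsAcyclic 𝓔 h₁) (hh₂ : IsAcyclic 𝓔 h₂)
    (hne : headCountVector n 𝓔 h₁ ≠ headCountVector n 𝓔 h₂)
    (hseg : IsExtreme ℝ (hypergraphicPolytope n 𝓔)
      (segment ℝ (headCountVector n 𝓔 h₁) (headCountVector n 𝓔 h₂))) :
    ∃ u v : Fin n, u ≠ v ∧ h₂ ≠ h₁ ∧ h₂ = flip 𝓔 h₁ u v := by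
  set d := headCountVector n 𝓔 h₂ - headCountVector n 𝓔 h₁
  have hsign : ∀ e, h₁ e ≠ h₂ e → ∀ w, (0 < d w ↔ w = h₂ e) ∧ (d w < 0 ↔ w = h₁ e) := by
    intro e he w
    obtain ⟨t, ht, hδ⟩ := exists_pos_smul_of_isExtreme_segment hh₁.1 hh₂.1 hseg he
    rw [← single_sub_single_pos_iff he, ← single_sub_single_neg_iff he, congrFun hδ w,
      Pi.smul_apply, smul_pos_iff_of_pos_left ht, smul_neg_iff_of_pos_left ht]
    exact ⟨Iff.rfl, Iff.rfl⟩
  obtain ⟨e₀, he₀⟩ : ∃ e, h₁ e ≠ h₂ e := by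
    by_contra! H
    exact hne (congrArg _ (funext H))
  refine ⟨h₁ e₀, h₂ e₀, he₀, fun H => hne (H ▸ rfl), funext fun e => ?_⟩
  by_cases he : h₁ e = h₂ e
  · rw [flip, if_neg, he]
    -- otherwise moving the head of `e` to `h₂ e₀` would push `x₂` beyond the segment
    rintro ⟨-, hv, heu⟩
    obtain ⟨t, ht, hδ⟩ := exists_pos_smul_of_isExtreme_segment hh₁.1 hh₂.1 hseg he₀
    refine notMem_extremePoints_of_add_smul_sub ht hne (headCountVector_mem hh₁.1)
      ?_ (headCountVector_mem_extremePoints hh₂)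
    rw [← hδ, ← heu, he, add_sub_assoc', ← headCountVector_update]
    exact headCountVector_mem (hh₂.1.update hv)
  · obtain ⟨h1e, h2e⟩ : h₁ e = h₁ e₀ ∧ h₂ e = h₂ e₀ :=
      ⟨(hsign e₀ he₀ _).2.mp ((hsign e he _).2.mpr rfl),
        (hsign e₀ he₀ _).1.mp ((hsign e he _).1.mpr rfl)⟩
    rw [flip, if_pos ⟨h1e ▸ hh₁.1 e, h2e ▸ hh₂.1 e, h1e⟩, h2e]

end Edges

/-- The head-count map is a bijection from the acyclic orientations of
`H` onto the vertex set (extreme points) of `P_H`; moreover two vertices corresponding to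
acyclic orientations `h₁, h₂` are adjacent on the skeleton of `P_H` iff `h₁` and `h₂` are
obtained from each other by flipping a pair `{u, v}` of distinct vertices. -/
theorem hypergraphicPolytope_vertices_and_adjacency (n : ℕ) (𝓔 : Finset (Finset (Fin n)))
    (hE : ∀ e ∈ 𝓔, e.Nonempty) :
    Set.BijOn (headCountVector n 𝓔) {h : Edge 𝓔 → Fin n | IsAcyclic 𝓔 h}
      ((hypergraphicPolytope n 𝓔).extremePoints ℝ) ∧
    ∀ h₁ h₂ : Edge 𝓔 → Fin n, IsAcyclic 𝓔 h₁ → IsAcyclic 𝓔 h₂ →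
      ((headCountVector n 𝓔 h₁ ≠ headCountVector n 𝓔 h₂ ∧
          IsExtreme ℝ (hypergraphicPolytope n 𝓔)
            (segment ℝ (headCountVector n 𝓔 h₁) (headCountVector n 𝓔 h₂))) ↔
        ∃ u v : Fin n, u ≠ v ∧ h₂ ≠ h₁ ∧
          (h₂ = flip 𝓔 h₁ u v ∨ h₂ = flip 𝓔 h₁ v u)) := by
  refine ⟨⟨fun h hh => headCountVector_mem_extremePoints hh, headCountVector_injOn,
    extremePoints_subset_image hE⟩, fun h₁ h₂ hh₁ hh₂ => ⟨fun ⟨hne, hseg⟩ => ?_, ?_⟩⟩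
  · obtain ⟨u, v, huv, hne', hflip⟩ := exists_flip_of_isExtreme_segment hh₁ hh₂ hne hseg
    exact ⟨u, v, huv, hne', .inl hflip⟩
  · rintro ⟨u, v, huv, hne, rfl | rfl⟩
    all_goals refine ⟨fun heq => hne (headCountVector_injOn hh₂ hh₁ heq.symm), ?_⟩
    · exact isExtreme_segment_of_flip hh₁ hh₂ hne huv
    · exact isExtreme_segment_of_flip hh₁ hh₂ hne huv.symm

end PaperFlip
end

section
/- Every sequence of flips transforming the acyclic orientation h₁ of the star gadget into the acyclic orientation h₂, in which no flipped pair contains the center vertex 0, has length at least 15. -/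
/-!
A hypergraph on vertex type `V` is given by a finite collection `𝓔` of nonempty
hyperedges (finsets of `V`).  An orientation assigns to each hyperedge a head
belonging to it.  `Arc 𝓔 h u v` is the arc relation of the digraph `D_h`, and an
orientation is acyclic if `D_h` has no directed cycle.  `flip 𝓔 h u v` is the
orientation `h^{(u,v)}`, and `(u, v)` is flippable in `h` if `h^{(u,v)}` is acyclic.
-/

namespace PaperFlip

variable {V : Type*} [DecidableEq V]

/-- The star gadget: the hypergraph on `{0, 1, …, 6}` with hyperedges `{0, i}` for
`i ∈ {1,…,6}` and `{0, i, j}` for distinct `i, j ∈ {1,…,6}`. -/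
def starEdges : Finset (Finset (Fin 7)) :=
  Finset.univ.filter fun e =>
    (∃ i : Fin 7, i ≠ 0 ∧ e = {0, i}) ∨
    (∃ i j : Fin 7, i ≠ 0 ∧ j ≠ 0 ∧ i ≠ j ∧ e = {0, i, j})

/-- The orientation `h₁` of the star gadget: `{0,i}` has head `i`, and `{0,i,j}` has
head `min(i,j)`; equivalently, every hyperedge gets the minimum of its nonzero
elements as head. -/
def starOrient₁ : Edge starEdges → Fin 7 := fun e => WithTop.untopD 0 ((e.1.erase 0).min)

/-- The orientation `h₂` of the star gadget: `{0,i}` has head `i`, and `{0,i,j}` has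
head `max(i,j)`; equivalently, every hyperedge gets the maximum of its nonzero
elements as head. -/
def starOrient₂ : Edge starEdges → Fin 7 := fun e => WithBot.unbotD 0 ((e.1.erase 0).max)

/-!
A flip at a pair `(u, v)` only moves heads of hyperedges containing both `u` and `v`. In the
star gadget the only such hyperedge for two leaves is `{0, u, v}`, so a flip avoiding the
center changes at most one head. Since `h₁` and `h₂` differ on all fifteen triples, at least
fifteen flips are needed.
-/

open Finset

lemma flip_apply_ne_iff {𝓔 : Finset (Finset V)} {h : Edge 𝓔 → V} {u v : V} {e : Edge 𝓔} :
    flip 𝓔 h u v e ≠ h e ↔ u ∈ e.1 ∧ v ∈ e.1 ∧ h e = u ∧ u ≠ v := by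
  unfold flip
  split_ifs <;> grind

lemma hammingDist_flip_le (𝓔 : Finset (Finset V)) (h : Edge 𝓔 → V) (u v : V) :
    hammingDist h (flip 𝓔 h u v) ≤ #{e ∈ 𝓔 | u ∈ e ∧ v ∈ e} := by
  refine card_le_card_of_injOn Subtype.val (fun e he => ?_) Subtype.val_injective.injOn
  obtain ⟨hu, hv, -⟩ := flip_apply_ne_iff.mp (Ne.symm (mem_filter.mp he).2)
  exact mem_filter.mpr ⟨e.2, hu, hv⟩

lemma hammingDist_le_of_hammingDist_succ_le_one {ι : Type*} [Fintype ι] {β : ι → Type*}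
    [∀ i, DecidableEq (β i)] (g : ℕ → ∀ i, β i) (n : ℕ)
    (hg : ∀ k < n, hammingDist (g k) (g (k + 1)) ≤ 1) : hammingDist (g 0) (g n) ≤ n := by
  induction n with
  | zero => simp
  | succ n ih =>
    calc hammingDist (g 0) (g (n + 1))
        ≤ hammingDist (g 0) (g n) + hammingDist (g n) (g (n + 1)) := hammingDist_triangle _ _ _
      _ ≤ n + 1 := add_le_add (ih fun k hk => hg k (by omega)) (hg n n.lt_add_one)

lemma eq_of_mem_starEdges {e : Finset (Fin 7)} (he : e ∈ starEdges) {u v : Fin 7}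
    (hu : u ≠ 0) (hv : v ≠ 0) (huv : u ≠ v) (hue : u ∈ e) (hve : v ∈ e) : e = {0, u, v} := by
  simp only [starEdges, mem_filter, mem_univ, true_and] at he
  rcases he with ⟨i, -, rfl⟩ | ⟨i, j, -, -, -, rfl⟩
  · simp only [mem_insert, mem_singleton] at hue hve
    grind
  · simp only [mem_insert, mem_singleton] at hue hve
    grind [pair_comm]

lemma card_starEdges_filter_mem_le_one {u v : Fin 7} (hu : u ≠ 0) (hv : v ≠ 0) (huv : u ≠ v) :
    #{e ∈ starEdges | u ∈ e ∧ v ∈ e} ≤ 1 :=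
  card_le_one.mpr fun _ ha _ hb =>
    have ha := mem_filter.mp ha
    have hb := mem_filter.mp hb
    (eq_of_mem_starEdges ha.1 hu hv huv ha.2.1 ha.2.2).trans
      (eq_of_mem_starEdges hb.1 hu hv huv hb.2.1 hb.2.2).symm

lemma hammingDist_starOrient : hammingDist starOrient₁ starOrient₂ = 15 := by
  decide +kernel

/-- Every flip sequence transforming `h₁` into `h₂` on the star gadget
in which no flipped pair contains the center vertex `0` has length at least `15`. -/
theorem star_gadget_avoid_center_flip_seq_length (ℓ : ℕ)
    (g : ℕ → Edge starEdges → Fin 7) (u v : ℕ → Fin 7)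
    (h0 : g 0 = starOrient₁) (hend : g ℓ = starOrient₂)
    (hflip : ∀ i < ℓ, Flippable starEdges (g i) (u i) (v i) ∧
      g (i + 1) = flip starEdges (g i) (u i) (v i) ∧ g (i + 1) ≠ g i)
    (havoid : ∀ i < ℓ, u i ≠ 0 ∧ v i ≠ 0) :
    15 ≤ ℓ := by
  have step : ∀ i < ℓ, hammingDist (g i) (g (i + 1)) ≤ 1 := fun i hi => by
    obtain ⟨⟨huv, -⟩, hgi, -⟩ := hflip i hi
    rw [hgi]
    exact (hammingDist_flip_le _ _ _ _).trans
      (card_starEdges_filter_mem_le_one (havoid i hi).1 (havoid i hi).2 huv)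
  have := hammingDist_le_of_hammingDist_succ_le_one g ℓ step
  rwa [h0, hend, hammingDist_starOrient] at this

end PaperFlip
end
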